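/- arXiv:1404.0176 — 6 statements merged into one kernel-verified Lean document; each statement's English description precedes it below -/
import Mathlib

section
/- Let $(M,g)$ be an ultrastatic spacetime with $g = -dt^2 + \bar{g}_{ij}dx^i dx^j$, and let $u^\mu = \gamma(1, v^i)$ be a stationary unit timelike vector field (so $\gamma^2 = 1/(1 - \bar{g}_{ij}v^iv^j)$ and $\partial_t v^i = 0$). Then the shear tensor $\sigma^{\mu\nu}$ and the expansion $\vartheta = \nabla_\mu u^\mu$ both vanish if and only if $v$ is a Killing vector field of the spatial metric $(\Sigma, \bar{g})$. -/
noncomputable section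

/-- Partial derivative of a scalar function on coordinate space `Fin n → ℝ`. -/
def pd {n : ℕ} (i : Fin n) (f : (Fin n → ℝ) → ℝ) (x : Fin n → ℝ) : ℝ :=
  fderiv ℝ f x (Pi.single i 1)

/-- Christoffel symbols Γ^l_{ij} of a metric `g` with inverse `ginv`. -/
def christoffel {n : ℕ} (g ginv : (Fin n → ℝ) → Matrix (Fin n) (Fin n) ℝ)
    (l i j : Fin n) (x : Fin n → ℝ) : ℝ :=
  (1/2) * ∑ r, ginv x l r *
    (pd i (fun y => g y r j) x + pd j (fun y => g y r i) x - pd r (fun y => g y i j) x)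

/-- Covariant derivative ∇_i u^j of a vector field. -/
def covDerivVec {n : ℕ} (g ginv : (Fin n → ℝ) → Matrix (Fin n) (Fin n) ℝ)
    (u : (Fin n → ℝ) → Fin n → ℝ) (i j : Fin n) (x : Fin n → ℝ) : ℝ :=
  pd i (fun y => u y j) x + ∑ r, christoffel g ginv j i r x * u x r

/-- Covariant derivative ∇_i w_j of a covector field. -/
def covDerivCovec {n : ℕ} (g ginv : (Fin n → ℝ) → Matrix (Fin n) (Fin n) ℝ)
    (w : (Fin n → ℝ) → Fin n → ℝ) (i j : Fin n) (x : Fin n → ℝ) : ℝ :=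
  pd i (fun y => w y j) x - ∑ r, christoffel g ginv r i j x * w x r

/-- Expansion ϑ = ∇_μ u^μ. -/
def expansion {n : ℕ} (g ginv : (Fin n → ℝ) → Matrix (Fin n) (Fin n) ℝ)
    (u : (Fin n → ℝ) → Fin n → ℝ) (x : Fin n → ℝ) : ℝ :=
  ∑ i, covDerivVec g ginv u i i x

/-- Projector P^{μν} = g^{μν} + u^μ u^ν. -/
def proj {n : ℕ} (ginv : (Fin n → ℝ) → Matrix (Fin n) (Fin n) ℝ)
    (u : (Fin n → ℝ) → Fin n → ℝ) (μ ν : Fin n) (x : Fin n → ℝ) : ℝ :=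
  ginv x μ ν + u x μ * u x ν

/-- Shear tensor σ^{μν} in spacetime dimension `d`:
σ^{μν} = ½(P^{μρ}∇_ρ u^ν + P^{νρ}∇_ρ u^μ) - ϑ P^{μν}/(d-1). -/
def shear {n : ℕ} (d : ℕ) (g ginv : (Fin n → ℝ) → Matrix (Fin n) (Fin n) ℝ)
    (u : (Fin n → ℝ) → Fin n → ℝ) (μ ν : Fin n) (x : Fin n → ℝ) : ℝ :=
  (1/2) * ((∑ ρ, proj ginv u μ ρ x * covDerivVec g ginv u ρ ν x)
    + (∑ ρ, proj ginv u ν ρ x * covDerivVec g ginv u ρ μ x))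
    - (1/((d : ℝ) - 1)) * expansion g ginv u x * proj ginv u μ ν x

/-- Projection of a spacetime point to its spatial coordinates. -/
def sp {n : ℕ} (x : Fin (n+1) → ℝ) : Fin n → ℝ := fun i => x i.succ

/-- Lift of a spatial metric to the ultrastatic spacetime metric
g = -dt² + ḡ_{ij} dx^i dx^j (block diagonal, time-independent). -/
def liftMetric {n : ℕ} (gb : (Fin n → ℝ) → Matrix (Fin n) (Fin n) ℝ) :
    (Fin (n+1) → ℝ) → Matrix (Fin (n+1)) (Fin (n+1)) ℝ :=
  fun x μ ν =>
    Fin.cases (Fin.cases (-1 : ℝ) (fun _ => 0) ν)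
      (fun i => Fin.cases (0 : ℝ) (fun j => gb (sp x) i j) ν) μ

/-- Squared speed v² = ḡ_{ij} v^i v^j. -/
def vsq {n : ℕ} (gb : (Fin n → ℝ) → Matrix (Fin n) (Fin n) ℝ)
    (v : (Fin n → ℝ) → Fin n → ℝ) (y : Fin n → ℝ) : ℝ :=
  ∑ i, ∑ j, gb y i j * v y i * v y j

/-- Lorentz factor γ = (1 - v²)^{-1/2}. -/
def lorentz {n : ℕ} (gb : (Fin n → ℝ) → Matrix (Fin n) (Fin n) ℝ)
    (v : (Fin n → ℝ) → Fin n → ℝ) (y : Fin n → ℝ) : ℝ :=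
  (Real.sqrt (1 - vsq gb v y))⁻¹

/-- The stationary velocity field u^μ = γ(1, v^i) on the ultrastatic spacetime. -/
def uvec {n : ℕ} (gb : (Fin n → ℝ) → Matrix (Fin n) (Fin n) ℝ)
    (v : (Fin n → ℝ) → Fin n → ℝ) (x : Fin (n+1) → ℝ) : Fin (n+1) → ℝ :=
  fun μ => Fin.cases (lorentz gb v (sp x)) (fun i => lorentz gb v (sp x) * v (sp x) i) μ

/-- Index lowering of a spatial vector field: v_j = ḡ_{jk} v^k. -/
def flat {n : ℕ} (gb : (Fin n → ℝ) → Matrix (Fin n) (Fin n) ℝ)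
    (v : (Fin n → ℝ) → Fin n → ℝ) (y : Fin n → ℝ) : Fin n → ℝ :=
  fun j => ∑ k, gb y j k * v y k

/-- `v` is a Killing field of `(Σ, ḡ)`: ∇̄_i v_j + ∇̄_j v_i = 0. -/
def IsKilling {n : ℕ} (gb gbinv : (Fin n → ℝ) → Matrix (Fin n) (Fin n) ℝ)
    (v : (Fin n → ℝ) → Fin n → ℝ) : Prop :=
  ∀ (y : Fin n → ℝ) (i j : Fin n),
    covDerivCovec gb gbinv (flat gb v) i j y + covDerivCovec gb gbinv (flat gb v) j i y = 0

section Toolkit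
variable {n : ℕ}

lemma pd_congr {f g : (Fin n → ℝ) → ℝ} (h : ∀ y, f y = g y) (i : Fin n) (x : Fin n → ℝ) :
    pd i f x = pd i g x := by
  have : f = g := funext h
  rw [this]

lemma pd_const (i : Fin n) (c : ℝ) (x : Fin n → ℝ) : pd i (fun _ => c) x = 0 := by
  simp [pd]

lemma pd_add {f g : (Fin n → ℝ) → ℝ} (hf : DifferentiableAt ℝ f x) (hg : DifferentiableAt ℝ g x)
    (i : Fin n) : pd i (fun y => f y + g y) x = pd i f x + pd i g x := by
  simp [pd, fderiv_fun_add hf hg]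

lemma pd_mul {x : Fin n → ℝ} {f g : (Fin n → ℝ) → ℝ} (hf : DifferentiableAt ℝ f x)
    (hg : DifferentiableAt ℝ g x) (i : Fin n) :
    pd i (fun y => f y * g y) x = pd i f x * g x + f x * pd i g x := by
  simp [pd, fderiv_fun_mul hf hg]; ring

lemma pd_sum {ι : Type*} {s : Finset ι} {f : ι → (Fin n → ℝ) → ℝ} {x : Fin n → ℝ}
    (hf : ∀ k ∈ s, DifferentiableAt ℝ (f k) x) (i : Fin n) :
    pd i (fun y => ∑ k ∈ s, f k y) x = ∑ k ∈ s, pd i (f k) x := by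
  simp [pd, fderiv_fun_sum hf]

end Toolkit
section Spatial
variable {n : ℕ} (gb gbinv : (Fin n → ℝ) → Matrix (Fin n) (Fin n) ℝ)
    (hg : ∀ i j, ContDiff ℝ (⊤ : ℕ∞) (fun y => gb y i j))
    (hpos : ∀ y, (gb y).PosDef)
    (hinv : ∀ y, gb y * gbinv y = 1)
    (v : (Fin n → ℝ) → Fin n → ℝ)
    (hv : ∀ i, ContDiff ℝ (⊤ : ℕ∞) (fun y => v y i))
    (hvlt : ∀ y, vsq gb v y < 1)

include hpos in
lemma gb_symm (y : Fin n → ℝ) (i j : Fin n) : gb y i j = gb y j i := by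
  have := (hpos y).1
  have h2 := congrFun (congrFun this i) j
  simpa [Matrix.conjTranspose_apply] using h2.symm

include hg hv in
lemma diff_vsq : Differentiable ℝ (vsq gb v) := by
  unfold vsq
  apply Differentiable.fun_sum; intro i _
  apply Differentiable.fun_sum; intro j _
  exact (((hg i j).differentiable (by simp)).mul ((hv i).differentiable (by simp))).mul
    ((hv j).differentiable (by simp))

include hvlt in
lemma sqrt_pos' (y : Fin n → ℝ) : 0 < Real.sqrt (1 - vsq gb v y) :=
  Real.sqrt_pos.mpr (by linarith [hvlt y])

include hg hv hvlt in
lemma hasfderiv_lorentz (y : Fin n → ℝ) :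
    HasFDerivAt (lorentz gb v)
      (((1/2) * (lorentz gb v y)^3) • fderiv ℝ (vsq gb v) y) y := by
  have hq : HasFDerivAt (vsq gb v) (fderiv ℝ (vsq gb v) y) y :=
    (diff_vsq gb hg v hv y).hasFDerivAt
  have h1 : HasFDerivAt (fun z => 1 - vsq gb v z)
      ((-1 : ℝ) • fderiv ℝ (vsq gb v) y) y := by
    exact ((hasFDerivAt_const (1:ℝ) y).fun_sub hq).congr_fderiv (by ext; simp)
  have hs : 0 < Real.sqrt (1 - vsq gb v y) := sqrt_pos' gb v hvlt y
  have hpos' : (0:ℝ) < 1 - vsq gb v y := by linarith [hvlt y]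
  have hsd : HasDerivAt (fun t => (Real.sqrt t)⁻¹)
      (-(1 / (2 * Real.sqrt (1 - vsq gb v y))) / (Real.sqrt (1 - vsq gb v y))^2)
      (1 - vsq gb v y) :=
    (Real.hasDerivAt_sqrt (ne_of_gt hpos')).inv (ne_of_gt hs)
  have := hsd.comp_hasFDerivAt y h1
  have heq : (-(1 / (2 * Real.sqrt (1 - vsq gb v y))) / (Real.sqrt (1 - vsq gb v y))^2) •
      ((-1 : ℝ) • fderiv ℝ (vsq gb v) y) = ((1/2) * (lorentz gb v y)^3) • fderiv ℝ (vsq gb v) y := by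
    rw [smul_smul]
    congr 1
    have h3 : Real.sqrt (1 - vsq gb v y) ≠ 0 := ne_of_gt hs
    unfold lorentz
    have h4 : Real.sqrt (1 - vsq gb v y) ^ 2 = 1 - vsq gb v y := Real.sq_sqrt hpos'.le
    field_simp
  rw [heq] at this
  exact this.congr_of_eventuallyEq (by filter_upwards with z; rfl)

include hg hv hvlt in
lemma diff_lorentz : Differentiable ℝ (lorentz gb v) :=
  fun y => (hasfderiv_lorentz gb hg v hv hvlt y).differentiableAt

include hg hv hvlt in
lemma pd_lorentz (i : Fin n) (y : Fin n → ℝ) :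
    pd i (lorentz gb v) y = (1/2) * (lorentz gb v y)^3 * pd i (vsq gb v) y := by
  rw [pd, (hasfderiv_lorentz gb hg v hv hvlt y).fderiv]
  simp [pd, mul_assoc]

end Spatial
section Lift
variable {n : ℕ}

/-- `sp` as a continuous linear map. -/
def spL (n : ℕ) : ((Fin (n+1) → ℝ)) →L[ℝ] (Fin n → ℝ) :=
  ContinuousLinearMap.pi (fun i => ContinuousLinearMap.proj i.succ)

lemma sp_eq (x : Fin (n+1) → ℝ) : sp x = spL n x := rfl

lemma spL_single_succ (i : Fin n) : spL n (Pi.single (Fin.succ i) (1:ℝ)) = Pi.single i 1 := by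
  funext j
  simp [spL, Pi.single_apply, Fin.succ_inj]

lemma spL_single_zero : spL n (Pi.single (0 : Fin (n+1)) (1:ℝ)) = 0 := by
  funext j
  simp [spL, Pi.single_apply, (Fin.succ_ne_zero j)]

lemma fderiv_comp_sp {f : (Fin n → ℝ) → ℝ} (x : Fin (n+1) → ℝ)
    (hf : DifferentiableAt ℝ f (sp x)) :
    fderiv ℝ (fun x => f (sp x)) x = (fderiv ℝ f (sp x)).comp (spL n) := by
  have : (fun x => f (sp x)) = f ∘ (spL n) := rfl
  rw [this, fderiv_comp x (by rw [← sp_eq]; exact hf) (spL n).differentiableAt,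
    (spL n).fderiv, ← sp_eq]

lemma pd_sp_succ {f : (Fin n → ℝ) → ℝ} (x : Fin (n+1) → ℝ)
    (hf : DifferentiableAt ℝ f (sp x)) (i : Fin n) :
    pd (Fin.succ i) (fun x => f (sp x)) x = pd i f (sp x) := by
  rw [pd, fderiv_comp_sp x hf]
  simp [spL_single_succ, pd]

lemma pd_sp_zero {f : (Fin n → ℝ) → ℝ} (x : Fin (n+1) → ℝ)
    (hf : DifferentiableAt ℝ f (sp x)) :
    pd 0 (fun x => f (sp x)) x = 0 := by
  rw [pd, fderiv_comp_sp x hf]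
  simp [spL_single_zero]

variable (gb : (Fin n → ℝ) → Matrix (Fin n) (Fin n) ℝ)

lemma lift00 (x) : liftMetric gb x 0 0 = -1 := rfl
lemma lift0S (x) (j : Fin n) : liftMetric gb x 0 (Fin.succ j) = 0 := by
  simp [liftMetric]
lemma liftS0 (x) (i : Fin n) : liftMetric gb x (Fin.succ i) 0 = 0 := by
  simp [liftMetric]
lemma liftSS (x) (i j : Fin n) : liftMetric gb x (Fin.succ i) (Fin.succ j) = gb (sp x) i j := by
  simp [liftMetric]

variable (hg : ∀ i j, ContDiff ℝ (⊤ : ℕ∞) (fun y => gb y i j))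

-- pd of lift entries
lemma pd_lift_0ν (μ : Fin (n+1)) (ν : Fin (n+1)) (x) :
    pd μ (fun x => liftMetric gb x 0 ν) x = 0 := by
  induction ν using Fin.cases with
  | zero => rw [pd_congr (fun y => lift00 gb y) μ x]; exact pd_const μ _ x
  | succ j => rw [pd_congr (fun y => lift0S gb y j) μ x]; exact pd_const μ _ x

lemma pd_lift_S0 (μ : Fin (n+1)) (i : Fin n) (x) :
    pd μ (fun x => liftMetric gb x (Fin.succ i) 0) x = 0 := by
  rw [pd_congr (fun y => liftS0 gb y i) μ x]; exact pd_const μ _ x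

include hg in
lemma pd_lift_time (μ ν : Fin (n+1)) (x) :
    pd 0 (fun x => liftMetric gb x μ ν) x = 0 := by
  induction μ using Fin.cases with
  | zero => exact pd_lift_0ν gb 0 ν x
  | succ i =>
    induction ν using Fin.cases with
    | zero => exact pd_lift_S0 gb 0 i x
    | succ j =>
      rw [pd_congr (fun y => liftSS gb y i j) 0 x]
      exact pd_sp_zero x ((hg i j).differentiable (by simp) _)

include hg in
lemma pd_lift_SS (k : Fin n) (i j : Fin n) (x) :
    pd (Fin.succ k) (fun x => liftMetric gb x (Fin.succ i) (Fin.succ j)) x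
      = pd k (fun y => gb y i j) (sp x) := by
  rw [pd_congr (fun y => liftSS gb y i j) _ x]
  exact pd_sp_succ x ((hg i j).differentiable (by simp) _) k

end Lift
section Christ
variable {n : ℕ} (gb gbinv : (Fin n → ℝ) → Matrix (Fin n) (Fin n) ℝ)
    (hg : ∀ i j, ContDiff ℝ (⊤ : ℕ∞) (fun y => gb y i j))

include hg in
lemma chr_lift_0 (μ ν : Fin (n+1)) (x) :
    christoffel (liftMetric gb) (liftMetric gbinv) 0 μ ν x = 0 := by
  unfold christoffel
  rw [Fin.sum_univ_succ]
  simp only [lift00, lift0S]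
  rw [pd_lift_0ν gb μ ν x, pd_lift_0ν gb ν μ x, pd_lift_time gb hg μ ν x]
  simp

include hg in
lemma chr_lift_S0 (k : Fin n) (ν : Fin (n+1)) (x) :
    christoffel (liftMetric gb) (liftMetric gbinv) (Fin.succ k) 0 ν x = 0 := by
  unfold christoffel
  rw [Fin.sum_univ_succ]
  rw [liftS0]
  have hterm : ∀ r : Fin n,
      liftMetric gbinv x (Fin.succ k) (Fin.succ r) *
        (pd 0 (fun y => liftMetric gb y (Fin.succ r) ν) x
          + pd ν (fun y => liftMetric gb y (Fin.succ r) 0) x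
          - pd (Fin.succ r) (fun y => liftMetric gb y 0 ν) x) = 0 := by
    intro r
    rw [pd_lift_time gb hg (Fin.succ r) ν x, pd_lift_S0 gb ν r x, pd_lift_0ν gb _ ν x]
    ring
  rw [Finset.sum_congr rfl (fun r _ => hterm r)]
  simp

include hg in
lemma chr_lift_0S (k : Fin n) (μ : Fin (n+1)) (x) :
    christoffel (liftMetric gb) (liftMetric gbinv) (Fin.succ k) μ 0 x = 0 := by
  have : christoffel (liftMetric gb) (liftMetric gbinv) (Fin.succ k) μ 0 x
      = christoffel (liftMetric gb) (liftMetric gbinv) (Fin.succ k) 0 μ x := by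
    unfold christoffel
    have hsym : ∀ y : Fin (n+1) → ℝ, ∀ ρ : Fin (n+1),
        liftMetric gb y ρ 0 = liftMetric gb y 0 ρ := by
      intro y ρ
      induction ρ using Fin.cases with
      | zero => rfl
      | succ i => rw [liftS0, lift0S]
    congr 1
    apply Finset.sum_congr rfl
    intro r _
    rw [pd_congr (fun y => hsym y μ) r x]
    ring
  rw [this, chr_lift_S0 gb gbinv hg k μ x]

include hg in
lemma chr_lift_SS (k i j : Fin n) (x) :
    christoffel (liftMetric gb) (liftMetric gbinv) (Fin.succ k) (Fin.succ i) (Fin.succ j) x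
      = christoffel gb gbinv k i j (sp x) := by
  unfold christoffel
  rw [Fin.sum_univ_succ, liftS0]
  have hterm : ∀ r : Fin n,
      liftMetric gbinv x (Fin.succ k) (Fin.succ r) *
        (pd (Fin.succ i) (fun y => liftMetric gb y (Fin.succ r) (Fin.succ j)) x
          + pd (Fin.succ j) (fun y => liftMetric gb y (Fin.succ r) (Fin.succ i)) x
          - pd (Fin.succ r) (fun y => liftMetric gb y (Fin.succ i) (Fin.succ j)) x)
      = gbinv (sp x) k r *
        (pd i (fun y => gb y r j) (sp x) + pd j (fun y => gb y r i) (sp x)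
          - pd r (fun y => gb y i j) (sp x)) := by
    intro r
    rw [liftSS, pd_lift_SS gb hg i r j x, pd_lift_SS gb hg j r i x, pd_lift_SS gb hg r i j x]
  rw [Finset.sum_congr rfl (fun r _ => hterm r)]
  ring
end Christ
/-- γ·v, the spatial part of u. -/
def gvel {n : ℕ} (gb : (Fin n → ℝ) → Matrix (Fin n) (Fin n) ℝ)
    (v : (Fin n → ℝ) → Fin n → ℝ) (y : Fin n → ℝ) (k : Fin n) : ℝ :=
  lorentz gb v y * v y k

section CovLift
variable {n : ℕ} (gb gbinv : (Fin n → ℝ) → Matrix (Fin n) (Fin n) ℝ)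
    (hg : ∀ i j, ContDiff ℝ (⊤ : ℕ∞) (fun y => gb y i j))
    (v : (Fin n → ℝ) → Fin n → ℝ)
    (hv : ∀ i, ContDiff ℝ (⊤ : ℕ∞) (fun y => v y i))
    (hvlt : ∀ y, vsq gb v y < 1)

lemma uvec0 (x) : uvec gb v x 0 = lorentz gb v (sp x) := rfl
lemma uvecS (x) (i : Fin n) : uvec gb v x (Fin.succ i) = gvel gb v (sp x) i := by
  simp [uvec, gvel]

include hg hv hvlt in
lemma diff_gvel (k : Fin n) : Differentiable ℝ (fun y => gvel gb v y k) :=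
  (diff_lorentz gb hg v hv hvlt).mul ((hv k).differentiable (by simp))

include hg hv hvlt in
lemma covD_lift_0 (ν : Fin (n+1)) (x) :
    covDerivVec (liftMetric gb) (liftMetric gbinv) (uvec gb v) 0 ν x = 0 := by
  unfold covDerivVec
  have h1 : pd 0 (fun y => uvec gb v y ν) x = 0 := by
    induction ν using Fin.cases with
    | zero =>
      rw [pd_congr (fun y => uvec0 gb v y) 0 x]
      exact pd_sp_zero x (diff_lorentz gb hg v hv hvlt _)
    | succ j =>
      rw [pd_congr (fun y => uvecS gb v y j) 0 x]
      exact pd_sp_zero x (diff_gvel gb hg v hv hvlt j _)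
  have h2 : ∀ ρ : Fin (n+1),
      christoffel (liftMetric gb) (liftMetric gbinv) ν 0 ρ x * uvec gb v x ρ = 0 := by
    intro ρ
    induction ν using Fin.cases with
    | zero => rw [chr_lift_0 gb gbinv hg 0 ρ x]; ring
    | succ k => rw [chr_lift_S0 gb gbinv hg k ρ x]; ring
  rw [h1, Finset.sum_congr rfl (fun ρ _ => h2 ρ)]
  simp

include hg hv hvlt in
lemma covD_lift_S0 (i : Fin n) (x) :
    covDerivVec (liftMetric gb) (liftMetric gbinv) (uvec gb v) (Fin.succ i) 0 x
      = pd i (lorentz gb v) (sp x) := by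
  unfold covDerivVec
  have h1 : pd (Fin.succ i) (fun y => uvec gb v y 0) x = pd i (lorentz gb v) (sp x) := by
    rw [pd_congr (fun y => uvec0 gb v y) _ x]
    exact pd_sp_succ x (diff_lorentz gb hg v hv hvlt _) i
  have h2 : ∀ ρ : Fin (n+1),
      christoffel (liftMetric gb) (liftMetric gbinv) 0 (Fin.succ i) ρ x * uvec gb v x ρ = 0 := by
    intro ρ
    rw [chr_lift_0 gb gbinv hg _ ρ x]; ring
  rw [h1, Finset.sum_congr rfl (fun ρ _ => h2 ρ)]
  simp

include hg hv hvlt in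
lemma covD_lift_SS (i j : Fin n) (x) :
    covDerivVec (liftMetric gb) (liftMetric gbinv) (uvec gb v) (Fin.succ i) (Fin.succ j) x
      = covDerivVec gb gbinv (gvel gb v) i j (sp x) := by
  unfold covDerivVec
  have h1 : pd (Fin.succ i) (fun y => uvec gb v y (Fin.succ j)) x
      = pd i (fun y => gvel gb v y j) (sp x) := by
    rw [pd_congr (fun y => uvecS gb v y j) _ x]
    exact pd_sp_succ x (diff_gvel gb hg v hv hvlt j _) i
  rw [h1]
  congr 1
  rw [Fin.sum_univ_succ, chr_lift_0S gb gbinv hg j (Fin.succ i) x]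
  have h2 : ∀ r : Fin n,
      christoffel (liftMetric gb) (liftMetric gbinv) (Fin.succ j) (Fin.succ i) (Fin.succ r) x *
        uvec gb v x (Fin.succ r)
      = christoffel gb gbinv j i r (sp x) * gvel gb v (sp x) r := by
    intro r
    rw [chr_lift_SS gb gbinv hg j i r x, uvecS]
  rw [Finset.sum_congr rfl (fun r _ => h2 r)]
  simp

include hg hv hvlt in
lemma expansion_lift (x) :
    expansion (liftMetric gb) (liftMetric gbinv) (uvec gb v) x
      = ∑ i, covDerivVec gb gbinv (gvel gb v) i i (sp x) := by
  unfold expansion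
  rw [Fin.sum_univ_succ, covD_lift_0 gb gbinv hg v hv hvlt 0 x]
  rw [Finset.sum_congr rfl (fun i _ => covD_lift_SS gb gbinv hg v hv hvlt i i x)]
  ring

-- Projector values
lemma proj00 (x) : proj (liftMetric gbinv) (uvec gb v) 0 0 x
    = -1 + lorentz gb v (sp x) * lorentz gb v (sp x) := rfl
lemma proj0S (x) (j : Fin n) : proj (liftMetric gbinv) (uvec gb v) 0 (Fin.succ j) x
    = lorentz gb v (sp x) * gvel gb v (sp x) j := by
  simp [proj, lift0S, uvec0, uvecS]
lemma projS0 (x) (i : Fin n) : proj (liftMetric gbinv) (uvec gb v) (Fin.succ i) 0 x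
    = lorentz gb v (sp x) * gvel gb v (sp x) i := by
  simp [proj, liftS0, uvec0, uvecS]; ring
lemma projSS (x) (i j : Fin n) : proj (liftMetric gbinv) (uvec gb v) (Fin.succ i) (Fin.succ j) x
    = gbinv (sp x) i j + gvel gb v (sp x) i * gvel gb v (sp x) j := by
  simp [proj, liftSS, uvecS]

end CovLift
section ShearComp
variable {n : ℕ} (gb gbinv : (Fin n → ℝ) → Matrix (Fin n) (Fin n) ℝ)
    (hg : ∀ i j, ContDiff ℝ (⊤ : ℕ∞) (fun y => gb y i j))
    (v : (Fin n → ℝ) → Fin n → ℝ)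
    (hv : ∀ i, ContDiff ℝ (⊤ : ℕ∞) (fun y => v y i))
    (hvlt : ∀ y, vsq gb v y < 1)

include hg hv hvlt in
lemma shear00_eq (x) :
    shear (n+1) (liftMetric gb) (liftMetric gbinv) (uvec gb v) 0 0 x
      = (∑ i, (lorentz gb v (sp x) * gvel gb v (sp x) i) * pd i (lorentz gb v) (sp x))
        - (1/((((n:ℝ)+1)) - 1)) * (∑ i, covDerivVec gb gbinv (gvel gb v) i i (sp x))
          * (-1 + lorentz gb v (sp x) * lorentz gb v (sp x)) := by
  unfold shear
  rw [expansion_lift gb gbinv hg v hv hvlt x, proj00]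
  have hsum : (∑ ρ, proj (liftMetric gbinv) (uvec gb v) 0 ρ x *
      covDerivVec (liftMetric gb) (liftMetric gbinv) (uvec gb v) ρ 0 x)
      = ∑ i, (lorentz gb v (sp x) * gvel gb v (sp x) i) * pd i (lorentz gb v) (sp x) := by
    rw [Fin.sum_univ_succ, covD_lift_0 gb gbinv hg v hv hvlt 0 x]
    rw [Finset.sum_congr rfl (fun i _ => by
      rw [proj0S, covD_lift_S0 gb gbinv hg v hv hvlt i x])]
    ring
  rw [hsum]
  push_cast
  ring

include hg hv hvlt in
lemma shear0S_eq (x) (j : Fin n) :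
    shear (n+1) (liftMetric gb) (liftMetric gbinv) (uvec gb v) 0 (Fin.succ j) x
      = (1/2) * ((∑ i, (lorentz gb v (sp x) * gvel gb v (sp x) i) *
            covDerivVec gb gbinv (gvel gb v) i j (sp x))
          + (∑ i, (gbinv (sp x) j i + gvel gb v (sp x) j * gvel gb v (sp x) i) *
            pd i (lorentz gb v) (sp x)))
        - (1/((((n:ℝ)+1)) - 1)) * (∑ i, covDerivVec gb gbinv (gvel gb v) i i (sp x))
          * (lorentz gb v (sp x) * gvel gb v (sp x) j) := by
  unfold shear
  rw [expansion_lift gb gbinv hg v hv hvlt x, proj0S]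
  have hsum1 : (∑ ρ, proj (liftMetric gbinv) (uvec gb v) 0 ρ x *
      covDerivVec (liftMetric gb) (liftMetric gbinv) (uvec gb v) ρ (Fin.succ j) x)
      = ∑ i, (lorentz gb v (sp x) * gvel gb v (sp x) i) *
          covDerivVec gb gbinv (gvel gb v) i j (sp x) := by
    rw [Fin.sum_univ_succ, covD_lift_0 gb gbinv hg v hv hvlt _ x]
    rw [Finset.sum_congr rfl (fun i _ => by
      rw [proj0S, covD_lift_SS gb gbinv hg v hv hvlt i j x])]
    ring
  have hsum2 : (∑ ρ, proj (liftMetric gbinv) (uvec gb v) (Fin.succ j) ρ x *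
      covDerivVec (liftMetric gb) (liftMetric gbinv) (uvec gb v) ρ 0 x)
      = ∑ i, (gbinv (sp x) j i + gvel gb v (sp x) j * gvel gb v (sp x) i) *
          pd i (lorentz gb v) (sp x) := by
    rw [Fin.sum_univ_succ, covD_lift_0 gb gbinv hg v hv hvlt _ x]
    rw [Finset.sum_congr rfl (fun i _ => by
      rw [projSS, covD_lift_S0 gb gbinv hg v hv hvlt i x])]
    ring
  rw [hsum1, hsum2]
  push_cast
  ring

include hg hv hvlt in
lemma shearSS_eq (x) (j k : Fin n) :
    shear (n+1) (liftMetric gb) (liftMetric gbinv) (uvec gb v) (Fin.succ j) (Fin.succ k) x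
      = (1/2) * ((∑ i, (gbinv (sp x) j i + gvel gb v (sp x) j * gvel gb v (sp x) i) *
            covDerivVec gb gbinv (gvel gb v) i k (sp x))
          + (∑ i, (gbinv (sp x) k i + gvel gb v (sp x) k * gvel gb v (sp x) i) *
            covDerivVec gb gbinv (gvel gb v) i j (sp x)))
        - (1/((((n:ℝ)+1)) - 1)) * (∑ i, covDerivVec gb gbinv (gvel gb v) i i (sp x))
          * (gbinv (sp x) j k + gvel gb v (sp x) j * gvel gb v (sp x) k) := by
  unfold shear
  rw [expansion_lift gb gbinv hg v hv hvlt x, projSS]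
  have hsum : ∀ a b : Fin n, (∑ ρ, proj (liftMetric gbinv) (uvec gb v) (Fin.succ a) ρ x *
      covDerivVec (liftMetric gb) (liftMetric gbinv) (uvec gb v) ρ (Fin.succ b) x)
      = ∑ i, (gbinv (sp x) a i + gvel gb v (sp x) a * gvel gb v (sp x) i) *
          covDerivVec gb gbinv (gvel gb v) i b (sp x) := by
    intro a b
    rw [Fin.sum_univ_succ, covD_lift_0 gb gbinv hg v hv hvlt _ x]
    rw [Finset.sum_congr rfl (fun i _ => by
      rw [projSS, covD_lift_SS gb gbinv hg v hv hvlt i b x])]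
    ring
  rw [hsum j k, hsum k j]
  push_cast
  ring

lemma shear_symm {m : ℕ} (d : ℕ) (g gi : (Fin m → ℝ) → Matrix (Fin m) (Fin m) ℝ)
    (u : (Fin m → ℝ) → Fin m → ℝ) (hsym : ∀ y a b, gi y a b = gi y b a) (μ ν : Fin m) (x) :
    shear d g gi u μ ν x = shear d g gi u ν μ x := by
  unfold shear proj
  rw [hsym x μ ν]
  ring

end ShearComp
section SpatialId
variable {n : ℕ} (gb gbinv : (Fin n → ℝ) → Matrix (Fin n) (Fin n) ℝ)
    (hg : ∀ i j, ContDiff ℝ (⊤ : ℕ∞) (fun y => gb y i j))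
    (hpos : ∀ y, (gb y).PosDef)
    (hinv : ∀ y, gb y * gbinv y = 1)
    (v : (Fin n → ℝ) → Fin n → ℝ)
    (hv : ∀ i, ContDiff ℝ (⊤ : ℕ∞) (fun y => v y i))
    (hvlt : ∀ y, vsq gb v y < 1)

include hinv in
lemma sum_gb_gbinv (y : Fin n → ℝ) (l s : Fin n) :
    ∑ r, gb y l r * gbinv y r s = if l = s then 1 else 0 := by
  have := congrFun (congrFun (hinv y) l) s
  rw [Matrix.mul_apply] at this
  rw [this, Matrix.one_apply]

include hinv in
lemma sum_gbinv_gb (y : Fin n → ℝ) (l s : Fin n) :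
    ∑ r, gbinv y l r * gb y r s = if l = s then 1 else 0 := by
  have h2 : gbinv y * gb y = 1 := mul_eq_one_comm.mp (hinv y)
  have := congrFun (congrFun h2 l) s
  rw [Matrix.mul_apply] at this
  rw [this, Matrix.one_apply]

include hpos hinv in
lemma gbinv_symm (y : Fin n → ℝ) (i j : Fin n) : gbinv y i j = gbinv y j i := by
  have h1 : Matrix.transpose (gb y) = gb y := by
    ext a b; exact gb_symm gb hpos y b a
  have h2 : gbinv y * gb y = 1 := mul_eq_one_comm.mp (hinv y)
  have h3 : Matrix.transpose (gbinv y) = gbinv y := by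
    calc Matrix.transpose (gbinv y) = Matrix.transpose (gbinv y) * (gb y * gbinv y) := by rw [hinv y, mul_one]
    _ = (Matrix.transpose (gbinv y) * Matrix.transpose (gb y)) * gbinv y := by rw [← mul_assoc, h1]
    _ = Matrix.transpose (gb y * gbinv y) * gbinv y := by rw [Matrix.transpose_mul]
    _ = gbinv y := by rw [hinv y, Matrix.transpose_one, one_mul]
  exact (congrFun (congrFun h3 i) j).symm

include hpos in
lemma Dg_symm (y : Fin n → ℝ) (a b c : Fin n) :
    pd a (fun y => gb y b c) y = pd a (fun y => gb y c b) y :=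
  pd_congr (fun z => gb_symm gb hpos z b c) a y

include hinv in
lemma chr_contract (y : Fin n → ℝ) (l i j : Fin n) :
    ∑ r, gb y l r * christoffel gb gbinv r i j y
      = (1/2) * (pd i (fun z => gb z l j) y + pd j (fun z => gb z l i) y
          - pd l (fun z => gb z i j) y) := by
  unfold christoffel
  calc ∑ r, gb y l r * ((1/2) * ∑ s, gbinv y r s *
        (pd i (fun z => gb z s j) y + pd j (fun z => gb z s i) y - pd s (fun z => gb z i j) y))
      = ∑ r, ∑ s, (gb y l r * gbinv y r s) * ((1/2) *
        (pd i (fun z => gb z s j) y + pd j (fun z => gb z s i) y - pd s (fun z => gb z i j) y)) := by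
        apply Finset.sum_congr rfl; intro r _
        simp only [Finset.mul_sum]
        apply Finset.sum_congr rfl; intro s _; ring
    _ = ∑ s, (∑ r, gb y l r * gbinv y r s) * ((1/2) *
        (pd i (fun z => gb z s j) y + pd j (fun z => gb z s i) y - pd s (fun z => gb z i j) y)) := by
        rw [Finset.sum_comm]
        apply Finset.sum_congr rfl; intro s _
        rw [Finset.sum_mul]
    _ = _ := by
        rw [Finset.sum_congr rfl (fun s _ => by rw [sum_gb_gbinv gb gbinv hinv y l s])]
        simp

include hg hv in
lemma diff_flat (j : Fin n) : Differentiable ℝ (fun y => flat gb v y j) := by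
  unfold flat
  apply Differentiable.fun_sum; intro k _
  exact ((hg j k).differentiable (by simp)).mul ((hv k).differentiable (by simp))

include hg hv in
lemma pd_flat (y : Fin n → ℝ) (i j : Fin n) :
    pd i (fun z => flat gb v z j) y
      = ∑ k, (pd i (fun z => gb z j k) y * v y k + gb y j k * pd i (fun z => v z k) y) := by
  unfold flat
  rw [pd_sum (fun k _ => ((hg j k).differentiable (by simp) _).fun_mul ((hv k).differentiable (by simp) _)) i]
  apply Finset.sum_congr rfl; intro k _
  exact pd_mul ((hg j k).differentiable (by simp) _) ((hv k).differentiable (by simp) _) i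

include hg hpos hinv hv in
lemma S_expand (y : Fin n → ℝ) (i j : Fin n) :
    covDerivCovec gb gbinv (flat gb v) i j y
      = ∑ l, (pd i (fun z => gb z j l) y * v y l + gb y j l * pd i (fun z => v z l) y)
        - ∑ l, (1/2) * (pd i (fun z => gb z l j) y + pd j (fun z => gb z l i) y
            - pd l (fun z => gb z i j) y) * v y l := by
  unfold covDerivCovec
  rw [pd_flat gb hg v hv y i j]
  congr 1
  calc ∑ r, christoffel gb gbinv r i j y * flat gb v y r
      = ∑ r, ∑ l, (gb y l r * christoffel gb gbinv r i j y) * v y l := by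
        apply Finset.sum_congr rfl; intro r _
        unfold flat
        rw [Finset.mul_sum]
        apply Finset.sum_congr rfl; intro l _
        rw [gb_symm gb hpos y r l]; ring
    _ = ∑ l, (∑ r, gb y l r * christoffel gb gbinv r i j y) * v y l := by
        rw [Finset.sum_comm]
        apply Finset.sum_congr rfl; intro l _
        rw [Finset.sum_mul]
    _ = _ := by
        apply Finset.sum_congr rfl; intro l _
        rw [chr_contract gb gbinv hinv y l i j]

end SpatialId
section Identities
variable {n : ℕ} (gb gbinv : (Fin n → ℝ) → Matrix (Fin n) (Fin n) ℝ)
    (hg : ∀ i j, ContDiff ℝ (⊤ : ℕ∞) (fun y => gb y i j))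
    (hpos : ∀ y, (gb y).PosDef)
    (hinv : ∀ y, gb y * gbinv y = 1)
    (v : (Fin n → ℝ) → Fin n → ℝ)
    (hv : ∀ i, ContDiff ℝ (⊤ : ℕ∞) (fun y => v y i))
    (hvlt : ∀ y, vsq gb v y < 1)

include hg hpos hinv hv in
lemma S_expand2 (y : Fin n → ℝ) (i k : Fin n) :
    covDerivCovec gb gbinv (flat gb v) i k y
      = ∑ l, (gb y k l * pd i (fun z => v z l) y
          + (1/2) * (pd i (fun z => gb z k l) y + pd l (fun z => gb z k i) y
              - pd k (fun z => gb z i l) y) * v y l) := by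
  rw [S_expand gb gbinv hg hpos hinv v hv y i k, ← Finset.sum_sub_distrib]
  apply Finset.sum_congr rfl; intro l _
  rw [Dg_symm gb hpos y i l k, Dg_symm gb hpos y k l i, Dg_symm gb hpos y l i k]
  ring

include hg hpos hinv hv in
lemma raise_S (y : Fin n → ℝ) (i j : Fin n) :
    covDerivVec gb gbinv v i j y
      = ∑ k, gbinv y j k * covDerivCovec gb gbinv (flat gb v) i k y := by
  rw [Finset.sum_congr rfl (fun k _ => by
    rw [S_expand2 gb gbinv hg hpos hinv v hv y i k])]
  symm
  calc (∑ k, gbinv y j k * ∑ l, (gb y k l * pd i (fun z => v z l) y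
          + (1/2) * (pd i (fun z => gb z k l) y + pd l (fun z => gb z k i) y
              - pd k (fun z => gb z i l) y) * v y l))
      = ∑ k, ∑ l, (gbinv y j k * gb y k l * pd i (fun z => v z l) y
          + gbinv y j k * ((1/2) * (pd i (fun z => gb z k l) y + pd l (fun z => gb z k i) y
              - pd k (fun z => gb z i l) y)) * v y l) := by
        apply Finset.sum_congr rfl; intro k _
        simp only [Finset.mul_sum]
        apply Finset.sum_congr rfl; intro l _; ring
    _ = ∑ l, ∑ k, (gbinv y j k * gb y k l * pd i (fun z => v z l) y
          + gbinv y j k * ((1/2) * (pd i (fun z => gb z k l) y + pd l (fun z => gb z k i) y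
              - pd k (fun z => gb z i l) y)) * v y l) := Finset.sum_comm
    _ = ∑ l, ((if j = l then (1:ℝ) else 0) * pd i (fun z => v z l) y
          + christoffel gb gbinv j i l y * v y l) := by
        apply Finset.sum_congr rfl; intro l _
        rw [Finset.sum_add_distrib, ← Finset.sum_mul, ← Finset.sum_mul,
          sum_gbinv_gb gb gbinv hinv y j l]
        congr 1
        congr 1
        unfold christoffel
        rw [Finset.mul_sum]
        apply Finset.sum_congr rfl; intro k _; ring
    _ = covDerivVec gb gbinv v i j y := by
        rw [Finset.sum_add_distrib]
        unfold covDerivVec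
        congr 1
        simp

include hg hv in
lemma pd_vsq (y : Fin n → ℝ) (i : Fin n) :
    pd i (vsq gb v) y = ∑ j, ∑ k,
      ((pd i (fun z => gb z j k) y * v y j + gb y j k * pd i (fun z => v z j) y) * v y k
        + gb y j k * v y j * pd i (fun z => v z k) y) := by
  have hd1 : ∀ (j k : Fin n), DifferentiableAt ℝ (fun z => gb z j k * v z j * v z k) y :=
    fun j k => ((((hg j k).differentiable (by simp) y).mul
      ((hv j).differentiable (by simp) y)).mul ((hv k).differentiable (by simp) y))
  unfold vsq
  rw [pd_sum (fun j _ => by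
    exact DifferentiableAt.fun_sum (fun k _ => hd1 j k)) i]
  apply Finset.sum_congr rfl; intro j _
  rw [pd_sum (fun k _ => hd1 j k) i]
  apply Finset.sum_congr rfl; intro k _
  rw [pd_mul (((hg j k).differentiable (by simp) y).fun_mul ((hv j).differentiable (by simp) y))
    ((hv k).differentiable (by simp) y) i,
    pd_mul ((hg j k).differentiable (by simp) y) ((hv j).differentiable (by simp) y) i]

include hg hpos hinv hv in
lemma pd_vsq_S (y : Fin n → ℝ) (i : Fin n) :
    pd i (vsq gb v) y = 2 * ∑ k, v y k * covDerivCovec gb gbinv (flat gb v) i k y := by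
  have key : ∀ (A : Fin n → Fin n → ℝ), (∑ k, ∑ l, (A k l - A l k)) = 0 := by
    intro A
    have h1 : (∑ k, ∑ l, A k l) = ∑ k, ∑ l, A l k := Finset.sum_comm
    simp only [Finset.sum_sub_distrib]
    rw [h1, sub_self]
  have hr : (2:ℝ) * (∑ k, v y k * covDerivCovec gb gbinv (flat gb v) i k y)
      = ∑ j, ∑ l, (2 * (v y j * (gb y j l * pd i (fun z => v z l) y
          + (1/2) * (pd i (fun z => gb z j l) y + pd l (fun z => gb z j i) y
              - pd j (fun z => gb z i l) y) * v y l))) := by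
    rw [Finset.mul_sum]
    apply Finset.sum_congr rfl; intro j _
    rw [S_expand2 gb gbinv hg hpos hinv v hv y i j, Finset.mul_sum, Finset.mul_sum]
  rw [pd_vsq gb hg v hv y i, hr, ← sub_eq_zero, ← Finset.sum_sub_distrib]
  have hterm : ∀ j : Fin n, ((∑ k, ((pd i (fun z => gb z j k) y * v y j
          + gb y j k * pd i (fun z => v z j) y) * v y k
          + gb y j k * v y j * pd i (fun z => v z k) y))
      - ∑ l, (2 * (v y j * (gb y j l * pd i (fun z => v z l) y
          + (1/2) * (pd i (fun z => gb z j l) y + pd l (fun z => gb z j i) y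
              - pd j (fun z => gb z i l) y) * v y l))))
      = ∑ l, ((gb y j l * v y l * pd i (fun z => v z j) y + v y j * v y l * pd j (fun z => gb z i l) y)
          - (gb y l j * v y j * pd i (fun z => v z l) y + v y l * v y j * pd l (fun z => gb z i j) y)) := by
    intro j
    rw [← Finset.sum_sub_distrib]
    apply Finset.sum_congr rfl; intro l _
    rw [Dg_symm gb hpos y l j i, gb_symm gb hpos y l j]
    ring
  rw [Finset.sum_congr rfl (fun j _ => hterm j)]
  exact key (fun j l => gb y j l * v y l * pd i (fun z => v z j) y
    + v y j * v y l * pd j (fun z => gb z i l) y)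

end Identities
section Helpers
variable {n : ℕ}

lemma pullA (c : ℝ) (a : Fin n → ℝ) (f : Fin n → Fin n → ℝ) :
    ∑ i, c * (a i * ∑ k, f i k) = c * ∑ i, ∑ k, a i * f i k := by
  simp only [Finset.mul_sum]

lemma swapAB (a : Fin n → ℝ) (b : Fin n → Fin n → ℝ) (f : Fin n → Fin n → ℝ) :
    ∑ i, ∑ k, a i * (b i k * f k i) = ∑ i, ∑ k, b k i * (a k * f i k) := by
  rw [Finset.sum_comm]
  apply Finset.sum_congr rfl; intro i _
  apply Finset.sum_congr rfl; intro k _; ring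

end Helpers

/-- Contractions of the covariant derivative of the lowered velocity. -/
def Pq {n : ℕ} (gb gbinv : (Fin n → ℝ) → Matrix (Fin n) (Fin n) ℝ)
    (v : (Fin n → ℝ) → Fin n → ℝ) (y : Fin n → ℝ) : ℝ :=
  ∑ i, ∑ k, v y i * (v y k * covDerivCovec gb gbinv (flat gb v) i k y)

def Tq {n : ℕ} (gb gbinv : (Fin n → ℝ) → Matrix (Fin n) (Fin n) ℝ)
    (v : (Fin n → ℝ) → Fin n → ℝ) (y : Fin n → ℝ) : ℝ :=
  ∑ i, ∑ k, gbinv y i k * covDerivCovec gb gbinv (flat gb v) i k y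

def Q1 {n : ℕ} (gb gbinv : (Fin n → ℝ) → Matrix (Fin n) (Fin n) ℝ)
    (v : (Fin n → ℝ) → Fin n → ℝ) (y : Fin n → ℝ) (j : Fin n) : ℝ :=
  ∑ i, ∑ k, v y i * (gbinv y j k * covDerivCovec gb gbinv (flat gb v) i k y)

def Q2 {n : ℕ} (gb gbinv : (Fin n → ℝ) → Matrix (Fin n) (Fin n) ℝ)
    (v : (Fin n → ℝ) → Fin n → ℝ) (y : Fin n → ℝ) (j : Fin n) : ℝ :=
  ∑ i, ∑ k, gbinv y j i * (v y k * covDerivCovec gb gbinv (flat gb v) i k y)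

def M1 {n : ℕ} (gb gbinv : (Fin n → ℝ) → Matrix (Fin n) (Fin n) ℝ)
    (v : (Fin n → ℝ) → Fin n → ℝ) (y : Fin n → ℝ) (j k : Fin n) : ℝ :=
  ∑ i, ∑ l, gbinv y j i * (gbinv y k l * covDerivCovec gb gbinv (flat gb v) i l y)

section Master
variable {n : ℕ} (gb gbinv : (Fin n → ℝ) → Matrix (Fin n) (Fin n) ℝ)
    (hg : ∀ i j, ContDiff ℝ (⊤ : ℕ∞) (fun y => gb y i j))
    (hpos : ∀ y, (gb y).PosDef)
    (hinv : ∀ y, gb y * gbinv y = 1)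
    (v : (Fin n → ℝ) → Fin n → ℝ)
    (hv : ∀ i, ContDiff ℝ (⊤ : ℕ∞) (fun y => v y i))
    (hvlt : ∀ y, vsq gb v y < 1)

include hg hpos hinv hv hvlt in
lemma B_eq (y : Fin n → ℝ) (i : Fin n) :
    pd i (lorentz gb v) y
      = (lorentz gb v y)^3 * ∑ k, v y k * covDerivCovec gb gbinv (flat gb v) i k y := by
  rw [pd_lorentz gb hg v hv hvlt i y, pd_vsq_S gb gbinv hg hpos hinv v hv y i]
  ring

include hg hpos hinv hv hvlt in
lemma C_eq (y : Fin n → ℝ) (i j : Fin n) :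
    covDerivVec gb gbinv (gvel gb v) i j y
      = lorentz gb v y * ∑ k, gbinv y j k * covDerivCovec gb gbinv (flat gb v) i k y
        + (v y j * (lorentz gb v y)^3) *
          ∑ k, v y k * covDerivCovec gb gbinv (flat gb v) i k y := by
  have h1 : pd i (fun z => gvel gb v z j) y
      = pd i (lorentz gb v) y * v y j + lorentz gb v y * pd i (fun z => v z j) y := by
    have := pd_mul (f := lorentz gb v) (g := fun z => v z j)
      (diff_lorentz gb hg v hv hvlt y) ((hv j).differentiable (by simp) y) i
    exact this
  have h2 : (∑ r, christoffel gb gbinv j i r y * gvel gb v y r)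
      = lorentz gb v y * ∑ r, christoffel gb gbinv j i r y * v y r := by
    rw [Finset.mul_sum]
    apply Finset.sum_congr rfl; intro r _
    unfold gvel; ring
  have h3 := raise_S gb gbinv hg hpos hinv v hv y i j
  unfold covDerivVec at h3 ⊢
  rw [h1, h2, B_eq gb gbinv hg hpos hinv v hv hvlt y i]
  linear_combination lorentz gb v y * h3

include hg hpos hinv hv hvlt in
lemma theta_S (y : Fin n → ℝ) :
    (∑ i, covDerivVec gb gbinv (gvel gb v) i i y)
      = lorentz gb v y * Tq gb gbinv v y + (lorentz gb v y)^3 * Pq gb gbinv v y := by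
  rw [Finset.sum_congr rfl (fun i _ => C_eq gb gbinv hg hpos hinv v hv hvlt y i i)]
  rw [Finset.sum_add_distrib]
  unfold Tq Pq
  congr 1
  · simp only [Finset.mul_sum]
  · simp only [Finset.mul_sum]
    apply Finset.sum_congr rfl; intro i _
    apply Finset.sum_congr rfl; intro k _
    ring

include hg hpos hinv hv hvlt in
lemma F_theta (x : Fin (n+1) → ℝ) :
    expansion (liftMetric gb) (liftMetric gbinv) (uvec gb v) x
      = lorentz gb v (sp x) * Tq gb gbinv v (sp x)
        + (lorentz gb v (sp x))^3 * Pq gb gbinv v (sp x) := by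
  rw [expansion_lift gb gbinv hg v hv hvlt x]
  exact theta_S gb gbinv hg hpos hinv v hv hvlt (sp x)

end Master
section Final
variable {n : ℕ} (gb gbinv : (Fin n → ℝ) → Matrix (Fin n) (Fin n) ℝ)
    (hg : ∀ i j, ContDiff ℝ (⊤ : ℕ∞) (fun y => gb y i j))
    (hpos : ∀ y, (gb y).PosDef)
    (hinv : ∀ y, gb y * gbinv y = 1)
    (v : (Fin n → ℝ) → Fin n → ℝ)
    (hv : ∀ i, ContDiff ℝ (⊤ : ℕ∞) (fun y => v y i))
    (hvlt : ∀ y, vsq gb v y < 1)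

include hg hpos hinv hv hvlt in
lemma sumB_eq (y : Fin n → ℝ) :
    (∑ i, (lorentz gb v y * gvel gb v y i) * pd i (lorentz gb v) y)
      = (lorentz gb v y)^5 * Pq gb gbinv v y := by
  have h : ∀ i : Fin n, (lorentz gb v y * gvel gb v y i) * pd i (lorentz gb v) y
      = (lorentz gb v y)^5 * (v y i * ∑ k, (v y k * covDerivCovec gb gbinv (flat gb v) i k y)) := by
    intro i
    rw [B_eq gb gbinv hg hpos hinv v hv hvlt y i]
    unfold gvel
    ring
  rw [Finset.sum_congr rfl (fun i _ => h i), pullA]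
  rfl

include hg hpos hinv hv hvlt in
lemma F00 (x : Fin (n+1) → ℝ) :
    shear (n+1) (liftMetric gb) (liftMetric gbinv) (uvec gb v) 0 0 x
      = (lorentz gb v (sp x))^5 * Pq gb gbinv v (sp x)
        - (1/(((n:ℝ)+1) - 1)) * (lorentz gb v (sp x) * Tq gb gbinv v (sp x)
            + (lorentz gb v (sp x))^3 * Pq gb gbinv v (sp x))
          * (-1 + lorentz gb v (sp x) * lorentz gb v (sp x)) := by
  rw [shear00_eq gb gbinv hg v hv hvlt x, theta_S gb gbinv hg hpos hinv v hv hvlt (sp x),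
    sumB_eq gb gbinv hg hpos hinv v hv hvlt (sp x)]

include hg hpos hinv hv hvlt in
lemma sumPB_eq (y : Fin n → ℝ) (j : Fin n) :
    (∑ i, (gbinv y j i + gvel gb v y j * gvel gb v y i) * pd i (lorentz gb v) y)
      = (lorentz gb v y)^3 * Q2 gb gbinv v y j
        + ((lorentz gb v y)^5 * v y j) * Pq gb gbinv v y := by
  have h : ∀ i : Fin n, (gbinv y j i + gvel gb v y j * gvel gb v y i) * pd i (lorentz gb v) y
      = (lorentz gb v y)^3 * (gbinv y j i * ∑ k, (v y k * covDerivCovec gb gbinv (flat gb v) i k y))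
        + ((lorentz gb v y)^5 * v y j) *
          (v y i * ∑ k, (v y k * covDerivCovec gb gbinv (flat gb v) i k y)) := by
    intro i
    rw [B_eq gb gbinv hg hpos hinv v hv hvlt y i]
    unfold gvel
    ring
  rw [Finset.sum_congr rfl (fun i _ => h i), Finset.sum_add_distrib, pullA, pullA]
  rfl

include hg hpos hinv hv hvlt in
lemma sumPC_eq (y : Fin n → ℝ) (a b : Fin n) :
    (∑ i, (gbinv y a i + gvel gb v y a * gvel gb v y i) *
        covDerivVec gb gbinv (gvel gb v) i b y)
      = lorentz gb v y * M1 gb gbinv v y a b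
        + ((lorentz gb v y)^3 * v y b) * Q2 gb gbinv v y a
        + ((lorentz gb v y)^3 * v y a) * Q1 gb gbinv v y b
        + ((lorentz gb v y)^5 * (v y a * v y b)) * Pq gb gbinv v y := by
  have h : ∀ i : Fin n, (gbinv y a i + gvel gb v y a * gvel gb v y i) *
        covDerivVec gb gbinv (gvel gb v) i b y
      = lorentz gb v y * (gbinv y a i * ∑ l, (gbinv y b l * covDerivCovec gb gbinv (flat gb v) i l y))
        + (((lorentz gb v y)^3 * v y b) * (gbinv y a i * ∑ k, (v y k * covDerivCovec gb gbinv (flat gb v) i k y))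
        + (((lorentz gb v y)^3 * v y a) * (v y i * ∑ l, (gbinv y b l * covDerivCovec gb gbinv (flat gb v) i l y))
        + ((lorentz gb v y)^5 * (v y a * v y b)) * (v y i * ∑ k, (v y k * covDerivCovec gb gbinv (flat gb v) i k y)))) := by
    intro i
    rw [C_eq gb gbinv hg hpos hinv v hv hvlt y i b]
    unfold gvel
    ring
  rw [Finset.sum_congr rfl (fun i _ => h i), Finset.sum_add_distrib, Finset.sum_add_distrib,
    Finset.sum_add_distrib, pullA, pullA, pullA, pullA]
  unfold M1 Q1 Q2 Pq
  ring

include hg hpos hinv hv hvlt in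
lemma sumVC_eq (y : Fin n → ℝ) (b : Fin n) :
    (∑ i, (lorentz gb v y * gvel gb v y i) * covDerivVec gb gbinv (gvel gb v) i b y)
      = (lorentz gb v y)^3 * Q1 gb gbinv v y b
        + ((lorentz gb v y)^5 * v y b) * Pq gb gbinv v y := by
  have h : ∀ i : Fin n, (lorentz gb v y * gvel gb v y i) *
        covDerivVec gb gbinv (gvel gb v) i b y
      = (lorentz gb v y)^3 * (v y i * ∑ l, (gbinv y b l * covDerivCovec gb gbinv (flat gb v) i l y))
        + ((lorentz gb v y)^5 * v y b) * (v y i * ∑ k, (v y k * covDerivCovec gb gbinv (flat gb v) i k y)) := by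
    intro i
    rw [C_eq gb gbinv hg hpos hinv v hv hvlt y i b]
    unfold gvel
    ring
  rw [Finset.sum_congr rfl (fun i _ => h i), Finset.sum_add_distrib, pullA, pullA]
  rfl

include hg hpos hinv hv hvlt in
lemma F0S (x : Fin (n+1) → ℝ) (j : Fin n) :
    shear (n+1) (liftMetric gb) (liftMetric gbinv) (uvec gb v) 0 (Fin.succ j) x
      = (1/2) * (((lorentz gb v (sp x))^3 * Q1 gb gbinv v (sp x) j
            + ((lorentz gb v (sp x))^5 * v (sp x) j) * Pq gb gbinv v (sp x))
          + ((lorentz gb v (sp x))^3 * Q2 gb gbinv v (sp x) j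
            + ((lorentz gb v (sp x))^5 * v (sp x) j) * Pq gb gbinv v (sp x)))
        - (1/(((n:ℝ)+1) - 1)) * (lorentz gb v (sp x) * Tq gb gbinv v (sp x)
            + (lorentz gb v (sp x))^3 * Pq gb gbinv v (sp x))
          * (lorentz gb v (sp x) * gvel gb v (sp x) j) := by
  rw [shear0S_eq gb gbinv hg v hv hvlt x j, theta_S gb gbinv hg hpos hinv v hv hvlt (sp x),
    sumVC_eq gb gbinv hg hpos hinv v hv hvlt (sp x) j,
    sumPB_eq gb gbinv hg hpos hinv v hv hvlt (sp x) j]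

include hg hpos hinv hv hvlt in
lemma FSS (x : Fin (n+1) → ℝ) (j k : Fin n) :
    shear (n+1) (liftMetric gb) (liftMetric gbinv) (uvec gb v) (Fin.succ j) (Fin.succ k) x
      = (1/2) * ((lorentz gb v (sp x) * M1 gb gbinv v (sp x) j k
            + ((lorentz gb v (sp x))^3 * v (sp x) k) * Q2 gb gbinv v (sp x) j
            + ((lorentz gb v (sp x))^3 * v (sp x) j) * Q1 gb gbinv v (sp x) k
            + ((lorentz gb v (sp x))^5 * (v (sp x) j * v (sp x) k)) * Pq gb gbinv v (sp x))
          + (lorentz gb v (sp x) * M1 gb gbinv v (sp x) k j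
            + ((lorentz gb v (sp x))^3 * v (sp x) j) * Q2 gb gbinv v (sp x) k
            + ((lorentz gb v (sp x))^3 * v (sp x) k) * Q1 gb gbinv v (sp x) j
            + ((lorentz gb v (sp x))^5 * (v (sp x) k * v (sp x) j)) * Pq gb gbinv v (sp x)))
        - (1/(((n:ℝ)+1) - 1)) * (lorentz gb v (sp x) * Tq gb gbinv v (sp x)
            + (lorentz gb v (sp x))^3 * Pq gb gbinv v (sp x))
          * (gbinv (sp x) j k + gvel gb v (sp x) j * gvel gb v (sp x) k) := by
  rw [shearSS_eq gb gbinv hg v hv hvlt x j k, theta_S gb gbinv hg hpos hinv v hv hvlt (sp x),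
    sumPC_eq gb gbinv hg hpos hinv v hv hvlt (sp x) j k,
    sumPC_eq gb gbinv hg hpos hinv v hv hvlt (sp x) k j]

end Final
section Relations
variable {n : ℕ} (gb gbinv : (Fin n → ℝ) → Matrix (Fin n) (Fin n) ℝ)
    (hpos : ∀ y, (gb y).PosDef)
    (hinv : ∀ y, gb y * gbinv y = 1)
    (v : (Fin n → ℝ) → Fin n → ℝ)

lemma relP (y : Fin n → ℝ) :
    2 * Pq gb gbinv v y = ∑ i, ∑ k, v y i * (v y k *
      (covDerivCovec gb gbinv (flat gb v) i k y + covDerivCovec gb gbinv (flat gb v) k i y)) := by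
  have hsplit : ∀ i : Fin n, (∑ k, v y i * (v y k *
      (covDerivCovec gb gbinv (flat gb v) i k y + covDerivCovec gb gbinv (flat gb v) k i y)))
      = ∑ k, (v y i * (v y k * covDerivCovec gb gbinv (flat gb v) i k y)
          + v y i * (v y k * covDerivCovec gb gbinv (flat gb v) k i y)) := by
    intro i; apply Finset.sum_congr rfl; intro k _; ring
  rw [Finset.sum_congr rfl (fun i _ => hsplit i)]
  simp only [Finset.sum_add_distrib]
  rw [swapAB (fun i => v y i) (fun i k => v y k) (fun k i => covDerivCovec gb gbinv (flat gb v) k i y)]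
  unfold Pq; ring

include hpos hinv in
lemma relT (y : Fin n → ℝ) :
    2 * Tq gb gbinv v y = ∑ i, ∑ k, gbinv y i k *
      (covDerivCovec gb gbinv (flat gb v) i k y + covDerivCovec gb gbinv (flat gb v) k i y) := by
  have hsplit : ∀ i : Fin n, (∑ k, gbinv y i k *
      (covDerivCovec gb gbinv (flat gb v) i k y + covDerivCovec gb gbinv (flat gb v) k i y))
      = ∑ k, (gbinv y i k * covDerivCovec gb gbinv (flat gb v) i k y
          + gbinv y i k * covDerivCovec gb gbinv (flat gb v) k i y) := by
    intro i; apply Finset.sum_congr rfl; intro k _; ring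
  rw [Finset.sum_congr rfl (fun i _ => hsplit i)]
  simp only [Finset.sum_add_distrib]
  have h2 : (∑ i, ∑ k, gbinv y i k * covDerivCovec gb gbinv (flat gb v) k i y)
      = Tq gb gbinv v y := by
    rw [Finset.sum_comm]
    apply Finset.sum_congr rfl; intro i _
    apply Finset.sum_congr rfl; intro k _
    rw [gbinv_symm gb gbinv hpos hinv y k i]
  rw [h2]
  unfold Tq; ring

lemma relQ (y : Fin n → ℝ) (j : Fin n) :
    Q1 gb gbinv v y j + Q2 gb gbinv v y j = ∑ i, ∑ k, gbinv y j k * (v y i *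
      (covDerivCovec gb gbinv (flat gb v) i k y + covDerivCovec gb gbinv (flat gb v) k i y)) := by
  have hsplit : ∀ i : Fin n, (∑ k, gbinv y j k * (v y i *
      (covDerivCovec gb gbinv (flat gb v) i k y + covDerivCovec gb gbinv (flat gb v) k i y)))
      = ∑ k, (v y i * (gbinv y j k * covDerivCovec gb gbinv (flat gb v) i k y)
          + gbinv y j k * (v y i * covDerivCovec gb gbinv (flat gb v) k i y)) := by
    intro i; apply Finset.sum_congr rfl; intro k _; ring
  rw [Finset.sum_congr rfl (fun i _ => hsplit i)]
  simp only [Finset.sum_add_distrib]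
  have h2 : (∑ i, ∑ k, gbinv y j k * (v y i * covDerivCovec gb gbinv (flat gb v) k i y))
      = Q2 gb gbinv v y j := by
    rw [Finset.sum_comm]
    apply Finset.sum_congr rfl; intro i _
    apply Finset.sum_congr rfl; intro k _
    ring
  rw [h2]
  rfl

lemma relM (y : Fin n → ℝ) (j k : Fin n) :
    M1 gb gbinv v y j k + M1 gb gbinv v y k j = ∑ i, ∑ l, gbinv y j i * (gbinv y k l *
      (covDerivCovec gb gbinv (flat gb v) i l y + covDerivCovec gb gbinv (flat gb v) l i y)) := by
  have hsplit : ∀ i : Fin n, (∑ l, gbinv y j i * (gbinv y k l *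
      (covDerivCovec gb gbinv (flat gb v) i l y + covDerivCovec gb gbinv (flat gb v) l i y)))
      = ∑ l, (gbinv y j i * (gbinv y k l * covDerivCovec gb gbinv (flat gb v) i l y)
          + gbinv y k l * (gbinv y j i * covDerivCovec gb gbinv (flat gb v) l i y)) := by
    intro i; apply Finset.sum_congr rfl; intro l _; ring
  rw [Finset.sum_congr rfl (fun i _ => hsplit i)]
  simp only [Finset.sum_add_distrib]
  have h2 : (∑ i, ∑ l, gbinv y k l * (gbinv y j i * covDerivCovec gb gbinv (flat gb v) l i y))
      = M1 gb gbinv v y k j := by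
    rw [Finset.sum_comm]
    apply Finset.sum_congr rfl; intro i _
    apply Finset.sum_congr rfl; intro l _
    ring
  rw [h2]
  rfl

include hinv in
lemma contract1 (y : Fin n → ℝ) (W : Fin n → ℝ) (a : Fin n)
    (h : ∀ j, ∑ i, gbinv y j i * W i = 0) :
    W a = 0 := by
  have hc : ∑ i, (∑ j, gb y a j * gbinv y j i) * W i = 0 := by
    have : ∀ i : Fin n, (∑ j, gb y a j * gbinv y j i) * W i
        = ∑ j, gb y a j * (gbinv y j i * W i) := by
      intro i; rw [Finset.sum_mul]; apply Finset.sum_congr rfl; intro j _; ring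
    rw [Finset.sum_congr rfl (fun i _ => this i), Finset.sum_comm]
    rw [Finset.sum_congr rfl (fun j _ => by rw [← Finset.mul_sum, h j, mul_zero])]
    simp
  rw [Finset.sum_congr rfl (fun i _ => by rw [sum_gb_gbinv gb gbinv hinv y a i])] at hc
  simpa using hc

end Relations
section Thm
variable {n : ℕ}

lemma sp_cons (y : Fin n → ℝ) : sp (Fin.cons 0 y) = y := by
  funext i
  simp [sp, Fin.cons_succ]

lemma liftInv_symm (gbinv : (Fin n → ℝ) → Matrix (Fin n) (Fin n) ℝ)
    (hs : ∀ y i j, gbinv y i j = gbinv y j i) :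
    ∀ (y : Fin (n+1) → ℝ) (a b : Fin (n+1)), liftMetric gbinv y a b = liftMetric gbinv y b a := by
  intro y a b
  induction a using Fin.cases with
  | zero =>
    induction b using Fin.cases with
    | zero => rfl
    | succ j => rw [lift0S, liftS0]
  | succ i =>
    induction b using Fin.cases with
    | zero => rw [lift0S, liftS0]
    | succ j => rw [liftSS, liftSS, hs]
end Thm

/-- **Proposition 1**: for a stationary unit timelike field u^μ = γ(1,v^i) on an
ultrastatic spacetime, the shear and the expansion both vanish iff v is a Killing
field of the spatial metric. -/
theorem shear_and_expansion_vanish_iff_killing {n : ℕ} (hn : 1 ≤ n)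
    (gb gbinv : (Fin n → ℝ) → Matrix (Fin n) (Fin n) ℝ)
    (hg : ∀ i j, ContDiff ℝ (⊤ : ℕ∞) (fun y => gb y i j))
    (hginv : ∀ i j, ContDiff ℝ (⊤ : ℕ∞) (fun y => gbinv y i j))
    (hpos : ∀ y, (gb y).PosDef)
    (hinv : ∀ y, gb y * gbinv y = 1)
    (v : (Fin n → ℝ) → Fin n → ℝ)
    (hv : ∀ i, ContDiff ℝ (⊤ : ℕ∞) (fun y => v y i))
    (hvlt : ∀ y, vsq gb v y < 1) :
    ((∀ (x : Fin (n+1) → ℝ) (μ ν : Fin (n+1)),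
        shear (n+1) (liftMetric gb) (liftMetric gbinv) (uvec gb v) μ ν x = 0) ∧
     (∀ x : Fin (n+1) → ℝ, expansion (liftMetric gb) (liftMetric gbinv) (uvec gb v) x = 0))
    ↔ IsKilling gb gbinv v := by
  constructor
  · rintro ⟨hshear, hexp⟩
    intro y a b
    set x : Fin (n+1) → ℝ := Fin.cons 0 y with hxdef
    have hsp : sp x = y := sp_cons y
    have hγpos : 0 < lorentz gb v y := inv_pos.mpr (sqrt_pos' gb v hvlt y)
    have hγ : lorentz gb v y ≠ 0 := ne_of_gt hγpos
    -- expansion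
    have hθ := hexp x
    rw [F_theta gb gbinv hg hpos hinv v hv hvlt x, hsp] at hθ
    -- P = 0
    have h00 := hshear x 0 0
    rw [F00 gb gbinv hg hpos hinv v hv hvlt x, hsp, hθ] at h00
    have hP : Pq gb gbinv v y = 0 := by
      have h2 : (lorentz gb v y)^5 * Pq gb gbinv v y = 0 := by linear_combination h00
      exact (mul_eq_zero.mp h2).resolve_left (pow_ne_zero 5 hγ)
    -- T = 0
    have hT : Tq gb gbinv v y = 0 := by
      rw [hP, mul_zero, add_zero] at hθ
      exact (mul_eq_zero.mp hθ).resolve_left hγ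
    -- Q1 + Q2 = 0
    have hQ : ∀ j, Q1 gb gbinv v y j + Q2 gb gbinv v y j = 0 := by
      intro j
      have h0j := hshear x 0 (Fin.succ j)
      rw [F0S gb gbinv hg hpos hinv v hv hvlt x j, hsp, hP, hT] at h0j
      have h2 : (lorentz gb v y)^3 * (Q1 gb gbinv v y j + Q2 gb gbinv v y j) = 0 := by
        linear_combination 2 * h0j
      exact (mul_eq_zero.mp h2).resolve_left (pow_ne_zero 3 hγ)
    -- M1 symmetrized = 0
    have hM : ∀ j k, M1 gb gbinv v y j k + M1 gb gbinv v y k j = 0 := by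
      intro j k
      have hjk := hshear x (Fin.succ j) (Fin.succ k)
      rw [FSS gb gbinv hg hpos hinv v hv hvlt x j k, hsp, hP, hT] at hjk
      have h2 : lorentz gb v y * (M1 gb gbinv v y j k + M1 gb gbinv v y k j) = 0 := by
        linear_combination 2 * hjk - ((lorentz gb v y)^3 * v y k) * hQ j
          - ((lorentz gb v y)^3 * v y j) * hQ k
      exact (mul_eq_zero.mp h2).resolve_left hγ
    -- contraction
    have hMK : ∀ j k, (∑ i, ∑ l, gbinv y j i * (gbinv y k l *
        (covDerivCovec gb gbinv (flat gb v) i l y + covDerivCovec gb gbinv (flat gb v) l i y))) = 0 := by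
      intro j k
      rw [← relM gb gbinv v y j k]
      exact hM j k
    have step1 : ∀ k a, (∑ l, gbinv y k l *
        (covDerivCovec gb gbinv (flat gb v) a l y + covDerivCovec gb gbinv (flat gb v) l a y)) = 0 := by
      intro k a
      apply contract1 gb gbinv hinv y
        (fun i => ∑ l, gbinv y k l *
          (covDerivCovec gb gbinv (flat gb v) i l y + covDerivCovec gb gbinv (flat gb v) l i y)) a
      intro j
      rw [Finset.sum_congr rfl (fun i (_ : i ∈ Finset.univ) => Finset.mul_sum Finset.univ
        (fun l => gbinv y k l * (covDerivCovec gb gbinv (flat gb v) i l y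
          + covDerivCovec gb gbinv (flat gb v) l i y)) (gbinv y j i))]
      exact hMK j k
    exact contract1 gb gbinv hinv y
      (fun l => covDerivCovec gb gbinv (flat gb v) a l y + covDerivCovec gb gbinv (flat gb v) l a y) b
      (fun k => step1 k a)
  · intro hK
    have hP : ∀ y, Pq gb gbinv v y = 0 := by
      intro y
      have h := relP gb gbinv v y
      rw [Finset.sum_congr rfl (fun i (_ : i ∈ Finset.univ) => Finset.sum_congr rfl
        (fun k (_ : k ∈ Finset.univ) => by rw [hK y i k, mul_zero, mul_zero]))] at h
      simp at h
      linarith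
    have hT : ∀ y, Tq gb gbinv v y = 0 := by
      intro y
      have h := relT gb gbinv hpos hinv v y
      rw [Finset.sum_congr rfl (fun i (_ : i ∈ Finset.univ) => Finset.sum_congr rfl
        (fun k (_ : k ∈ Finset.univ) => by rw [hK y i k, mul_zero]))] at h
      simp at h
      linarith
    have hQ : ∀ y j, Q1 gb gbinv v y j + Q2 gb gbinv v y j = 0 := by
      intro y j
      have h := relQ gb gbinv v y j
      rw [Finset.sum_congr rfl (fun i (_ : i ∈ Finset.univ) => Finset.sum_congr rfl
        (fun k (_ : k ∈ Finset.univ) => by rw [hK y i k, mul_zero, mul_zero]))] at h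
      simpa using h
    have hM : ∀ y j k, M1 gb gbinv v y j k + M1 gb gbinv v y k j = 0 := by
      intro y j k
      have h := relM gb gbinv v y j k
      rw [Finset.sum_congr rfl (fun i (_ : i ∈ Finset.univ) => Finset.sum_congr rfl
        (fun l (_ : l ∈ Finset.univ) => by rw [hK y i l, mul_zero, mul_zero]))] at h
      simpa using h
    constructor
    · intro x μ ν
      have hsymL := liftInv_symm gbinv (fun y i j => gbinv_symm gb gbinv hpos hinv y i j)
      induction μ using Fin.cases with
      | zero =>
        induction ν using Fin.cases with
        | zero =>
          rw [F00 gb gbinv hg hpos hinv v hv hvlt x, hP (sp x), hT (sp x)]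
          ring
        | succ j =>
          rw [F0S gb gbinv hg hpos hinv v hv hvlt x j, hP (sp x), hT (sp x)]
          linear_combination ((lorentz gb v (sp x))^3 / 2) * hQ (sp x) j
      | succ i =>
        induction ν using Fin.cases with
        | zero =>
          rw [shear_symm (n+1) (liftMetric gb) (liftMetric gbinv) (uvec gb v) hsymL
            (Fin.succ i) 0 x]
          rw [F0S gb gbinv hg hpos hinv v hv hvlt x i, hP (sp x), hT (sp x)]
          linear_combination ((lorentz gb v (sp x))^3 / 2) * hQ (sp x) i
        | succ j =>
          rw [FSS gb gbinv hg hpos hinv v hv hvlt x i j, hP (sp x), hT (sp x)]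
          linear_combination (lorentz gb v (sp x) / 2) * hM (sp x) i j
            + ((lorentz gb v (sp x))^3 * v (sp x) j / 2) * hQ (sp x) i
            + ((lorentz gb v (sp x))^3 * v (sp x) i / 2) * hQ (sp x) j
    · intro x
      rw [F_theta gb gbinv hg hpos hinv v hv hvlt x, hP (sp x), hT (sp x)]
      ring

end
end

section
/- For the rigidly rotating conformal fluid on $\mathbb{R}\times S^2$ of radius $\ell$ with angular velocity $\omega$ satisfying $\omega^2\ell^2 < 1$, the conserved charges $E = \frac{8\pi\ell^2\tau^3 h(\psi)}{(1-\omega^2\ell^2)^2}$, $L = \frac{8\pi\ell^4\tau^3\omega h(\psi)}{(1-\omega^2\ell^2)^2}$, $S = \frac{4\pi\ell^2\tau^2(3h(\psi)-\psi h'(\psi))}{1-\omega^2\ell^2}$, $Q_e = \frac{4\pi\ell^2\tau^2 h'(\psi)}{1-\omega^2\ell^2}$, regarded as smooth functions of the parameters $(\tau, \omega, \psi)$, satisfy the first law $dE = \tau\, dS + \omega\, dL + \tau\psi\, dQ_e$ as an identity of differential forms on parameter space. -/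
noncomputable section

open Real ContinuousLinearMap

abbrev P1 : (ℝ × ℝ × ℝ) →L[ℝ] ℝ := fst ℝ ℝ (ℝ × ℝ)
abbrev P2 : (ℝ × ℝ × ℝ) →L[ℝ] ℝ := (fst ℝ ℝ ℝ).comp (snd ℝ ℝ (ℝ × ℝ))
abbrev P3 : (ℝ × ℝ × ℝ) →L[ℝ] ℝ := (snd ℝ ℝ ℝ).comp (snd ℝ ℝ (ℝ × ℝ))

lemma key (n : ℕ) (c : ℝ) (w g : ℝ → ℝ) (w' g' : ℝ) (p : ℝ × ℝ × ℝ)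
    (hw : HasDerivAt w w' p.2.1) (hg : HasDerivAt g g' p.2.2) :
    HasFDerivAt (fun q : ℝ × ℝ × ℝ => c * (q.1 ^ n * w q.2.1 * g q.2.2))
      (c • (((n : ℝ) * p.1 ^ (n - 1) * w p.2.1 * g p.2.2) • P1
        + (p.1 ^ n * w' * g p.2.2) • P2 + (p.1 ^ n * w p.2.1 * g') • P3)) p := by
  have h1 : HasFDerivAt (fun q : ℝ × ℝ × ℝ => q.1 ^ n)
      (((n : ℝ) * p.1 ^ (n - 1)) • P1) p :=
    (hasDerivAt_pow n p.1).comp_hasFDerivAt p hasFDerivAt_fst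
  have h2 : HasFDerivAt (fun q : ℝ × ℝ × ℝ => w q.2.1) (w' • P2) p :=
    hw.comp_hasFDerivAt p ((hasFDerivAt_fst).comp p hasFDerivAt_snd)
  have h3 : HasFDerivAt (fun q : ℝ × ℝ × ℝ => g q.2.2) (g' • P3) p :=
    hg.comp_hasFDerivAt p ((hasFDerivAt_snd).comp p hasFDerivAt_snd)
  have := ((h1.mul h2).mul h3).const_mul c
  refine this.congr_fderiv ?_
  refine ContinuousLinearMap.ext fun v => ?_
  simp
  ring

set_option maxHeartbeats 1000000 in
/-- **First law for the rigidly rotating conformal fluid on ℝ×S².**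
With E, L, S, Q_e given by the explicit formulas as functions of the
parameters (τ, ω, ψ), the identity of 1-forms dE = τ dS + ω dL + τψ dQ_e
holds on the parameter region τ > 0, ω²ℓ² < 1. -/
theorem first_law_rotating_fluid_sphere (ℓ : ℝ) (hℓ : 0 < ℓ)
    (h : ℝ → ℝ) (hh : ContDiff ℝ (⊤ : ℕ∞) h)
    (E L S Q : ℝ × ℝ × ℝ → ℝ)
    (hE : ∀ p : ℝ × ℝ × ℝ,
      E p = 8 * π * ℓ ^ 2 * p.1 ^ 3 * h p.2.2 / (1 - p.2.1 ^ 2 * ℓ ^ 2) ^ 2)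
    (hL : ∀ p : ℝ × ℝ × ℝ,
      L p = 8 * π * ℓ ^ 4 * p.1 ^ 3 * p.2.1 * h p.2.2 / (1 - p.2.1 ^ 2 * ℓ ^ 2) ^ 2)
    (hS : ∀ p : ℝ × ℝ × ℝ,
      S p = 4 * π * ℓ ^ 2 * p.1 ^ 2 * (3 * h p.2.2 - p.2.2 * deriv h p.2.2) /
        (1 - p.2.1 ^ 2 * ℓ ^ 2))
    (hQ : ∀ p : ℝ × ℝ × ℝ,
      Q p = 4 * π * ℓ ^ 2 * p.1 ^ 2 * deriv h p.2.2 / (1 - p.2.1 ^ 2 * ℓ ^ 2)) :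
    ∀ p : ℝ × ℝ × ℝ, 0 < p.1 → p.2.1 ^ 2 * ℓ ^ 2 < 1 →
      fderiv ℝ E p
        = p.1 • fderiv ℝ S p + p.2.1 • fderiv ℝ L p + (p.1 * p.2.2) • fderiv ℝ Q p := by
  intro p hτ hω
  obtain ⟨x, y, z⟩ := p
  simp only at hτ hω ⊢
  set d : ℝ := 1 - y ^ 2 * ℓ ^ 2 with hd_def
  have hd : d ≠ 0 := by simp only [hd_def]; nlinarith
  -- derivative of the inner denominator function
  have hinner : ∀ t : ℝ, HasDerivAt (fun s : ℝ => 1 - s ^ 2 * ℓ ^ 2)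
      (-(2 * t * ℓ ^ 2)) t := by
    intro t
    have := ((hasDerivAt_pow 2 t).mul_const (ℓ ^ 2)).const_sub 1
    simpa using this
  -- w for E : (d²)⁻¹
  have hw2 : HasDerivAt (fun s : ℝ => ((1 - s ^ 2 * ℓ ^ 2) ^ 2)⁻¹)
      (4 * y * ℓ ^ 2 / d ^ 3) y := by
    have hb : HasDerivAt (fun s : ℝ => (1 - s ^ 2 * ℓ ^ 2) ^ 2)
        (2 * d * -(2 * y * ℓ ^ 2)) y := by
      have := ((hinner y).pow 2)
      refine this.congr_deriv ?_
      norm_num [hd_def]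
    have := hb.inv (pow_ne_zero 2 hd)
    refine this.congr_deriv ?_
    simp only [← hd_def, id_eq]
    field_simp
    ring
  -- w for L : s * (d²)⁻¹
  have hwL : HasDerivAt (fun s : ℝ => s * ((1 - s ^ 2 * ℓ ^ 2) ^ 2)⁻¹)
      ((d + 4 * y ^ 2 * ℓ ^ 2) / d ^ 3) y := by
    have := (hasDerivAt_id y).mul hw2
    refine this.congr_deriv ?_
    simp only [← hd_def, id_eq]
    field_simp
  -- w for S, Q : d⁻¹
  have hwv : HasDerivAt (fun s : ℝ => (1 - s ^ 2 * ℓ ^ 2)⁻¹)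
      (2 * y * ℓ ^ 2 / d ^ 2) y := by
    have := (hinner y).inv hd
    refine this.congr_deriv ?_
    simp only [← hd_def, id_eq]
    field_simp
  -- derivatives in ψ
  have hh' : Differentiable ℝ (deriv h) :=
    ((contDiff_infty_iff_deriv.mp (hh.of_le (by simp))).2).differentiable
      (by simp)
  have hdh : ∀ t : ℝ, HasDerivAt h (deriv h t) t :=
    fun t => (hh.differentiable (by simp) t).hasDerivAt
  have hdh' : ∀ t : ℝ, HasDerivAt (deriv h) (deriv (deriv h) t) t :=
    fun t => (hh' t).hasDerivAt
  have hgS : HasDerivAt (fun t : ℝ => 3 * h t - t * deriv h t)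
      (2 * deriv h z - z * deriv (deriv h) z) z := by
    have := ((hdh z).const_mul 3).sub ((hasDerivAt_id z).mul (hdh' z))
    refine this.congr_deriv ?_
    simp only [id_eq, one_mul]
    ring
  -- rewrite the four functions into the canonical shape and compute fderiv
  have hEf : E = fun q : ℝ × ℝ × ℝ =>
      (8 * π * ℓ ^ 2) * (q.1 ^ 3 * ((1 - q.2.1 ^ 2 * ℓ ^ 2) ^ 2)⁻¹ * h q.2.2) := by
    funext q; rw [hE q]; ring
  have hLf : L = fun q : ℝ × ℝ × ℝ =>
      (8 * π * ℓ ^ 4) * (q.1 ^ 3 * (q.2.1 * ((1 - q.2.1 ^ 2 * ℓ ^ 2) ^ 2)⁻¹) * h q.2.2) := by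
    funext q; rw [hL q]; ring
  have hSf : S = fun q : ℝ × ℝ × ℝ =>
      (4 * π * ℓ ^ 2) * (q.1 ^ 2 * (1 - q.2.1 ^ 2 * ℓ ^ 2)⁻¹ *
        (3 * h q.2.2 - q.2.2 * deriv h q.2.2)) := by
    funext q; rw [hS q]; ring
  have hQf : Q = fun q : ℝ × ℝ × ℝ =>
      (4 * π * ℓ ^ 2) * (q.1 ^ 2 * (1 - q.2.1 ^ 2 * ℓ ^ 2)⁻¹ * deriv h q.2.2) := by
    funext q; rw [hQ q]; ring
  have hDE := (key 3 (8 * π * ℓ ^ 2) _ h (4 * y * ℓ ^ 2 / d ^ 3) (deriv h z)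
    (x, y, z) hw2 (hdh z)).fderiv
  have hDL := (key 3 (8 * π * ℓ ^ 4) _ h ((d + 4 * y ^ 2 * ℓ ^ 2) / d ^ 3) (deriv h z)
    (x, y, z) hwL (hdh z)).fderiv
  have hDS := (key 2 (4 * π * ℓ ^ 2) _ _ (2 * y * ℓ ^ 2 / d ^ 2)
    (2 * deriv h z - z * deriv (deriv h) z) (x, y, z) hwv hgS).fderiv
  have hDQ := (key 2 (4 * π * ℓ ^ 2) _ (deriv h) (2 * y * ℓ ^ 2 / d ^ 2)
    (deriv (deriv h) z) (x, y, z) hwv (hdh' z)).fderiv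
  rw [hEf, hLf, hSf, hQf, hDE, hDL, hDS, hDQ]
  refine ContinuousLinearMap.ext fun v => ?_
  simp only [ContinuousLinearMap.add_apply, ContinuousLinearMap.smul_apply,
    ContinuousLinearMap.comp_apply, ContinuousLinearMap.coe_fst',
    ContinuousLinearMap.coe_snd', smul_eq_mul, hd_def]
  have hd' : (1 : ℝ) - y ^ 2 * ℓ ^ 2 ≠ 0 := hd
  field_simp
  ring
end
end

section
/- The local first law for a rigidly rotating fluid on $\mathbb{R}\times H^2$: with $\gamma = (1-\omega^2\ell^2\sinh^2\theta)^{-1/2}$ at fixed $\theta$, define the densities $\varepsilon = \mathcal{P}_0\gamma^3(3\gamma^2-1)$ with $\mathcal{P}_0 = \tau^3 h(\psi)$, $l = 3\tau^3 h(\psi)\ell^2\omega\gamma^5\sinh^2\theta$, $\sigma = \tau^2\gamma^3(3h(\psi)-\psi h'(\psi))$, $\varrho_e = \tau^2\gamma^3 h'(\psi)$, as functions of the parameters $(\tau, \omega, \psi)$. Then $d\varepsilon = \tau\, d\sigma + \omega\, dl + \tau\psi\, d\varrho_e$ holds as an identity of 1-forms on parameter space. -/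
noncomputable section

open Real

private lemma fderiv_dir1 {f : ℝ × ℝ × ℝ → ℝ} {t w s : ℝ}
    (hf : DifferentiableAt ℝ f (t, w, s)) {D : ℝ}
    (hD : HasDerivAt (fun x => f (x, w, s)) D t) :
    fderiv ℝ f (t, w, s) (1, 0, 0) = D := by
  have hc : HasDerivAt (fun x : ℝ => ((x, w, s) : ℝ × ℝ × ℝ)) ((1 : ℝ), (0 : ℝ), (0 : ℝ)) t :=
    (hasDerivAt_id t).prodMk ((hasDerivAt_const t w).prodMk (hasDerivAt_const t s))
  exact (hf.hasFDerivAt.comp_hasDerivAt t hc).unique hD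

private lemma fderiv_dir2 {f : ℝ × ℝ × ℝ → ℝ} {t w s : ℝ}
    (hf : DifferentiableAt ℝ f (t, w, s)) {D : ℝ}
    (hD : HasDerivAt (fun y => f (t, y, s)) D w) :
    fderiv ℝ f (t, w, s) (0, 1, 0) = D := by
  have hc : HasDerivAt (fun y : ℝ => ((t, y, s) : ℝ × ℝ × ℝ)) ((0 : ℝ), (1 : ℝ), (0 : ℝ)) w :=
    (hasDerivAt_const w t).prodMk ((hasDerivAt_id w).prodMk (hasDerivAt_const w s))
  exact (hf.hasFDerivAt.comp_hasDerivAt w hc).unique hD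

private lemma fderiv_dir3 {f : ℝ × ℝ × ℝ → ℝ} {t w s : ℝ}
    (hf : DifferentiableAt ℝ f (t, w, s)) {D : ℝ}
    (hD : HasDerivAt (fun z => f (t, w, z)) D s) :
    fderiv ℝ f (t, w, s) (0, 0, 1) = D := by
  have hc : HasDerivAt (fun z : ℝ => ((t, w, z) : ℝ × ℝ × ℝ)) ((0 : ℝ), (0 : ℝ), (1 : ℝ)) s :=
    (hasDerivAt_const s t).prodMk ((hasDerivAt_const s w).prodMk (hasDerivAt_id s))
  exact (hf.hasFDerivAt.comp_hasDerivAt s hc).unique hD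

private lemma clm_ext3 {L M : ℝ × ℝ × ℝ →L[ℝ] ℝ} (h1 : L (1,0,0) = M (1,0,0))
    (h2 : L (0,1,0) = M (0,1,0)) (h3 : L (0,0,1) = M (0,0,1)) : L = M := by
  apply ContinuousLinearMap.ext
  intro v
  have hv : v = v.1 • ((1:ℝ),(0:ℝ),(0:ℝ)) + v.2.1 • ((0:ℝ),(1:ℝ),(0:ℝ))
      + v.2.2 • ((0:ℝ),(0:ℝ),(1:ℝ)) := by
    simp [Prod.ext_iff]
  rw [hv]
  simp only [map_add, map_smul, h1, h2, h3]

/-- **Local first law for the rigidly rotating fluid on ℝ×H².**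
With γ = (1-ω²ℓ²sinh²θ)^{-1/2} at fixed θ and the local densities
ε = 𝒫₀γ³(3γ²-1), l = 3τ³h(ψ)ℓ²ωγ⁵sinh²θ, σ = τ²γ³(3h(ψ)-ψh'(ψ)),
ϱ_e = τ²γ³h'(ψ), viewed as functions of (τ, ω, ψ), the identity of 1-forms
dε = τ dσ + ω dl + τψ dϱ_e holds on the region τ > 0, ω²ℓ²sinh²θ < 1. -/
theorem local_first_law_rotating_fluid_hyperbolic (ℓ θ : ℝ) (hℓ : 0 < ℓ)
    (h : ℝ → ℝ) (hh : ContDiff ℝ (⊤ : ℕ∞) h)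
    (γ : ℝ → ℝ)
    (hγ : ∀ w : ℝ, γ w = (Real.sqrt (1 - w ^ 2 * ℓ ^ 2 * Real.sinh θ ^ 2))⁻¹)
    (ε l σ ϱ : ℝ × ℝ × ℝ → ℝ)
    (hε : ∀ p : ℝ × ℝ × ℝ,
      ε p = p.1 ^ 3 * h p.2.2 * γ p.2.1 ^ 3 * (3 * γ p.2.1 ^ 2 - 1))
    (hl : ∀ p : ℝ × ℝ × ℝ,
      l p = 3 * p.1 ^ 3 * h p.2.2 * ℓ ^ 2 * p.2.1 * γ p.2.1 ^ 5 * Real.sinh θ ^ 2)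
    (hσ : ∀ p : ℝ × ℝ × ℝ,
      σ p = p.1 ^ 2 * γ p.2.1 ^ 3 * (3 * h p.2.2 - p.2.2 * deriv h p.2.2))
    (hϱ : ∀ p : ℝ × ℝ × ℝ,
      ϱ p = p.1 ^ 2 * γ p.2.1 ^ 3 * deriv h p.2.2) :
    ∀ p : ℝ × ℝ × ℝ, 0 < p.1 → p.2.1 ^ 2 * ℓ ^ 2 * Real.sinh θ ^ 2 < 1 →
      fderiv ℝ ε p
        = p.1 • fderiv ℝ σ p + p.2.1 • fderiv ℝ l p + (p.1 * p.2.2) • fderiv ℝ ϱ p := by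
  intro p ht hw
  obtain ⟨t, w, s⟩ := p
  dsimp only at ht hw ⊢
  -- basic facts
  have hu : 0 < 1 - w ^ 2 * ℓ ^ 2 * Real.sinh θ ^ 2 := by linarith
  have hsu : 0 < Real.sqrt (1 - w ^ 2 * ℓ ^ 2 * Real.sinh θ ^ 2) := Real.sqrt_pos.mpr hu
  have hrel : (1 - w ^ 2 * ℓ ^ 2 * Real.sinh θ ^ 2) * γ w ^ 2 = 1 := by
    rw [hγ w, inv_pow, Real.sq_sqrt hu.le]
    exact mul_inv_cancel₀ hu.ne'
  -- derivative of γ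
  have hg : HasDerivAt γ (ℓ ^ 2 * Real.sinh θ ^ 2 * w * γ w ^ 3) w := by
    rw [funext hγ]
    have h1 : HasDerivAt (fun y : ℝ => 1 - y ^ 2 * ℓ ^ 2 * Real.sinh θ ^ 2)
        (-((2 : ℕ) * w ^ 1 * ℓ ^ 2 * Real.sinh θ ^ 2)) w :=
      HasDerivAt.const_sub 1
        (((hasDerivAt_pow 2 w).mul_const (ℓ ^ 2)).mul_const (Real.sinh θ ^ 2))
    have h4 := ((Real.hasDerivAt_sqrt hu.ne').comp w h1).inv hsu.ne'
    simp only [Function.comp_def, Pi.inv_def] at h4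
    set x := Real.sqrt (1 - w ^ 2 * ℓ ^ 2 * Real.sinh θ ^ 2) with hx
    have hxne : x ≠ 0 := hsu.ne'
    refine h4.congr_deriv ?_
    field_simp
    ring
  -- differentiability facts
  have hγd : DifferentiableAt ℝ γ w := hg.differentiableAt
  have hhd : Differentiable ℝ h := hh.differentiable (by simp)
  have hhtop : ContDiff ℝ ((⊤ : ℕ∞) : WithTop ℕ∞) h := hh.of_le (by simp)
  have hhd' : Differentiable ℝ (deriv h) :=
    ((contDiff_infty_iff_deriv.mp hhtop).2).differentiable (by simp)
  have hhs : HasDerivAt h (deriv h s) s := (hhd s).hasDerivAt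
  have hh2s : HasDerivAt (deriv h) (deriv (deriv h) s) s := (hhd' s).hasDerivAt
  have hεd : DifferentiableAt ℝ ε (t, w, s) := by rw [funext hε]; fun_prop
  have hσd : DifferentiableAt ℝ σ (t, w, s) := by rw [funext hσ]; fun_prop
  have hld : DifferentiableAt ℝ l (t, w, s) := by rw [funext hl]; fun_prop
  have hϱd : DifferentiableAt ℝ ϱ (t, w, s) := by rw [funext hϱ]; fun_prop
  -- the twelve partial derivatives
  have Eε1 : fderiv ℝ ε (t, w, s) (1, 0, 0)
      = 3 * t ^ 2 * h s * γ w ^ 3 * (3 * γ w ^ 2 - 1) := by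
    apply fderiv_dir1 hεd
    simp only [hε]
    have T := (((hasDerivAt_pow 3 t).mul_const (h s)).mul_const (γ w ^ 3)).mul_const
      (3 * γ w ^ 2 - 1)
    refine T.congr_deriv ?_
    try push_cast
    try ring
  have Eσ1 : fderiv ℝ σ (t, w, s) (1, 0, 0)
      = 2 * t * γ w ^ 3 * (3 * h s - s * deriv h s) := by
    apply fderiv_dir1 hσd
    simp only [hσ]
    have T := ((hasDerivAt_pow 2 t).mul_const (γ w ^ 3)).mul_const
      (3 * h s - s * deriv h s)
    refine T.congr_deriv ?_
    try push_cast
    try ring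
  have El1 : fderiv ℝ l (t, w, s) (1, 0, 0)
      = 9 * t ^ 2 * h s * ℓ ^ 2 * w * γ w ^ 5 * Real.sinh θ ^ 2 := by
    apply fderiv_dir1 hld
    simp only [hl]
    have T := (((((hasDerivAt_pow 3 t).const_mul 3).mul_const (h s)).mul_const
      (ℓ ^ 2)).mul_const w).mul_const (γ w ^ 5) |>.mul_const (Real.sinh θ ^ 2)
    refine T.congr_deriv ?_
    try push_cast
    try ring
  have Eϱ1 : fderiv ℝ ϱ (t, w, s) (1, 0, 0)
      = 2 * t * γ w ^ 3 * deriv h s := by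
    apply fderiv_dir1 hϱd
    simp only [hϱ]
    have T := ((hasDerivAt_pow 2 t).mul_const (γ w ^ 3)).mul_const (deriv h s)
    refine T.congr_deriv ?_
    try push_cast
    try ring
  have Eε2 : fderiv ℝ ε (t, w, s) (0, 1, 0)
      = t ^ 3 * h s * ℓ ^ 2 * Real.sinh θ ^ 2 * w * (15 * γ w ^ 7 - 3 * γ w ^ 5) := by
    apply fderiv_dir2 hεd
    simp only [hε]
    have T := ((hg.pow 3).const_mul (t ^ 3 * h s)).mul
      (((hg.pow 2).const_mul 3).sub_const 1)
    refine T.congr_deriv ?_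
    simp only [Pi.pow_apply]
    try push_cast
    try ring
  have Eσ2 : fderiv ℝ σ (t, w, s) (0, 1, 0)
      = 3 * t ^ 2 * ℓ ^ 2 * Real.sinh θ ^ 2 * w * γ w ^ 5
        * (3 * h s - s * deriv h s) := by
    apply fderiv_dir2 hσd
    simp only [hσ]
    have T := ((hg.pow 3).const_mul (t ^ 2)).mul_const (3 * h s - s * deriv h s)
    refine T.congr_deriv ?_
    try push_cast
    try ring
  have El2 : fderiv ℝ l (t, w, s) (0, 1, 0)
      = 3 * t ^ 3 * h s * ℓ ^ 2 * Real.sinh θ ^ 2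
        * (γ w ^ 5 + 5 * ℓ ^ 2 * Real.sinh θ ^ 2 * w ^ 2 * γ w ^ 7) := by
    apply fderiv_dir2 hld
    simp only [hl]
    have T := (((hasDerivAt_id' w).const_mul (3 * t ^ 3 * h s * ℓ ^ 2)).mul
      (hg.pow 5)).mul_const (Real.sinh θ ^ 2)
    refine T.congr_deriv ?_
    simp only [Pi.pow_apply]
    try push_cast
    try ring
  have Eϱ2 : fderiv ℝ ϱ (t, w, s) (0, 1, 0)
      = 3 * t ^ 2 * ℓ ^ 2 * Real.sinh θ ^ 2 * w * γ w ^ 5 * deriv h s := by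
    apply fderiv_dir2 hϱd
    simp only [hϱ]
    have T := ((hg.pow 3).const_mul (t ^ 2)).mul_const (deriv h s)
    refine T.congr_deriv ?_
    try push_cast
    try ring
  have Eε3 : fderiv ℝ ε (t, w, s) (0, 0, 1)
      = t ^ 3 * deriv h s * γ w ^ 3 * (3 * γ w ^ 2 - 1) := by
    apply fderiv_dir3 hεd
    simp only [hε]
    have T := ((hhs.const_mul (t ^ 3)).mul_const (γ w ^ 3)).mul_const
      (3 * γ w ^ 2 - 1)
    refine T.congr_deriv ?_
    simp only [Pi.pow_apply]
    try push_cast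
    try ring
  have Eσ3 : fderiv ℝ σ (t, w, s) (0, 0, 1)
      = t ^ 2 * γ w ^ 3 * (2 * deriv h s - s * deriv (deriv h) s) := by
    apply fderiv_dir3 hσd
    simp only [hσ]
    have T := ((hhs.const_mul 3).sub ((hasDerivAt_id' s).mul hh2s)).const_mul
      (t ^ 2 * γ w ^ 3)
    refine T.congr_deriv ?_
    try push_cast
    try ring
  have El3 : fderiv ℝ l (t, w, s) (0, 0, 1)
      = 3 * t ^ 3 * deriv h s * ℓ ^ 2 * w * γ w ^ 5 * Real.sinh θ ^ 2 := by
    apply fderiv_dir3 hld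
    simp only [hl]
    have T := ((((hhs.const_mul (3 * t ^ 3)).mul_const (ℓ ^ 2)).mul_const w).mul_const
      (γ w ^ 5)).mul_const (Real.sinh θ ^ 2)
    refine T.congr_deriv ?_
    simp only [Pi.pow_apply]
    try push_cast
    try ring
  have Eϱ3 : fderiv ℝ ϱ (t, w, s) (0, 0, 1)
      = t ^ 2 * γ w ^ 3 * deriv (deriv h) s := by
    apply fderiv_dir3 hϱd
    simp only [hϱ]
    have T := hh2s.const_mul (t ^ 2 * γ w ^ 3)
    refine T.congr_deriv ?_
    simp only [Pi.pow_apply]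
    try push_cast
    try ring
  -- conclude by checking the three components
  apply clm_ext3 <;>
    simp only [ContinuousLinearMap.add_apply, ContinuousLinearMap.smul_apply, smul_eq_mul]
  · rw [Eε1, Eσ1, El1, Eϱ1]
    linear_combination (9 * t ^ 2 * h s * γ w ^ 3) * hrel
  · rw [Eε2, Eσ2, El2, Eϱ2]
    linear_combination (15 * t ^ 3 * h s * ℓ ^ 2 * Real.sinh θ ^ 2 * w * γ w ^ 5) * hrel
  · rw [Eε3, Eσ3, El3, Eϱ3]
    linear_combination (3 * t ^ 3 * deriv h s * γ w ^ 3) * hrel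

end
end

section
/- Verification of the fluid stress tensor conservation on $\mathbb{R}\times S^2$: on the manifold with metric $g = -dt^2 + \ell^2(d\theta^2 + \sin^2\theta\, d\varphi^2)$, the tensor $T^{\mu\nu} = \mathcal{P}(g^{\mu\nu} + 3u^\mu u^\nu)$ with $u = \gamma(\partial_t + \omega\partial_\varphi)$, $\gamma = (1-\omega^2\ell^2\sin^2\theta)^{-1/2}$, and $\mathcal{P} = \mathcal{P}_0\gamma^3$ satisfies $\nabla_\mu T^{\mu\nu} = 0$, where $\nabla$ is the Levi-Civita connection of $g$. -/
/-!
Every component of the metric and of `T` depends on `θ` alone, so the divergence is a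
`θ`-derivative plus Christoffel terms, and the only nonzero symbols are `Γ^θ_{φφ}` and
`Γ^φ_{θφ} = Γ^φ_{φθ}`. Since `T^{θt} = T^{θφ} = 0`, the `t`- and `φ`-components vanish
identically. The `θ`-component is hydrostatic balance: `∂_θ 𝒫 / ℓ²` must equal the centrifugal
term `3 𝒫 γ² ω² sin θ cos θ`, and `γ' = ω² ℓ² sin θ cos θ γ³` makes this hold for `𝒫 = 𝒫₀ γ³`.
-/

noncomputable section

open Real

/-- Covariant divergence ∇_μ T^{μν} of a (2,0)-tensor field. -/
def divTensor {n : ℕ} (g ginv : (Fin n → ℝ) → Matrix (Fin n) (Fin n) ℝ)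
    (T : (Fin n → ℝ) → Fin n → Fin n → ℝ) (ν : Fin n) (x : Fin n → ℝ) : ℝ :=
  (∑ μ, pd μ (fun y => T y μ ν) x)
    + (∑ μ, ∑ ρ, christoffel g ginv μ μ ρ x * T x ρ ν)
    + (∑ μ, ∑ ρ, christoffel g ginv ν μ ρ x * T x μ ρ)

/-- Metric of ℝ×S² in coordinates (t,θ,φ): g = -dt² + ℓ²(dθ² + sin²θ dφ²). -/
def gS2 (ℓ : ℝ) (x : Fin 3 → ℝ) : Matrix (Fin 3) (Fin 3) ℝ :=
  Matrix.diagonal ![-1, ℓ ^ 2, ℓ ^ 2 * Real.sin (x 1) ^ 2]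

/-- Inverse metric of ℝ×S². -/
def gS2inv (ℓ : ℝ) (x : Fin 3 → ℝ) : Matrix (Fin 3) (Fin 3) ℝ :=
  Matrix.diagonal ![-1, (ℓ ^ 2)⁻¹, (ℓ ^ 2 * Real.sin (x 1) ^ 2)⁻¹]

/-- Lorentz factor γ = (1 - ω²ℓ²sin²θ)^{-1/2}. -/
def γS2 (ℓ ω : ℝ) (x : Fin 3 → ℝ) : ℝ :=
  (Real.sqrt (1 - ω ^ 2 * ℓ ^ 2 * Real.sin (x 1) ^ 2))⁻¹

/-- Fluid velocity u = γ(∂_t + ω ∂_φ). -/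
def uS2 (ℓ ω : ℝ) (x : Fin 3 → ℝ) : Fin 3 → ℝ :=
  ![γS2 ℓ ω x, 0, γS2 ℓ ω x * ω]

open Function

section Coordinates

variable {n : ℕ}

-- No differentiability hypothesis: if `F` is not differentiable at `x j`, both sides are junk `0`.
theorem pd_comp_apply (F : ℝ → ℝ) (i j : Fin n) (x : Fin n → ℝ) :
    pd i (fun y => F (y j)) x = if i = j then deriv F (x j) else 0 := by
  by_cases hF : DifferentiableAt ℝ F (x j)
  · have hFj : HasFDerivAt (fun y => F (y j)) (deriv F (x j) • ContinuousLinearMap.proj j) x :=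
      hF.hasDerivAt.comp_hasFDerivAt x (hasFDerivAt_apply (𝕜 := ℝ) (F' := fun _ => ℝ) j x)
    rw [pd, hFj.fderiv]
    by_cases hij : i = j <;> simp [hij]
  · have hf : ¬ DifferentiableAt ℝ (fun y : Fin n → ℝ => F (y j)) x := fun hf => hF <| by
      simpa [comp_def] using (hf.hasFDerivAt.comp_hasDerivAt_of_eq (x j)
        (hasDerivAt_update x j (x j)) (by simp)).differentiableAt
    simp [pd, fderiv_zero_of_not_differentiableAt hf, deriv_zero_of_not_differentiableAt hF]

theorem pd_of_dependsOn {f : (Fin n → ℝ) → ℝ} {j : Fin n} (hf : DependsOn f {j})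
    (i : Fin n) (x : Fin n → ℝ) :
    pd i f x = if i = j then deriv (fun t => f (update x j t)) (x j) else 0 := by
  set F : ℝ → ℝ := fun t => f (update x j t)
  have hfF : f = fun y => F (y j) := funext fun y => hf (by simp)
  rw [hfF, pd_comp_apply]

theorem sum_pd_of_dependsOn {f : Fin n → (Fin n → ℝ) → ℝ} {j : Fin n}
    (hf : ∀ i, DependsOn (f i) {j}) (x : Fin n → ℝ) :
    ∑ i, pd i (f i) x = deriv (fun t => f j (update x j t)) (x j) := by
  simp [pd_of_dependsOn (hf _)]

end Coordinates

theorem HasDerivAt.inv_sqrt {q : ℝ → ℝ} {q' t : ℝ} (hq : HasDerivAt q q' t) (hpos : 0 < q t) :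
    HasDerivAt (fun s => (√(q s))⁻¹) (-(q' / 2) * (√(q t))⁻¹ ^ 3) t := by
  have hsqrt : √(q t) ≠ 0 := (Real.sqrt_pos.mpr hpos).ne'
  refine ((hq.sqrt hpos.ne').inv hsqrt).congr_deriv ?_
  field_simp

section RotatingFluidOnSphere

variable (ℓ ω P₀ : ℝ)

theorem dependsOn_gS2 (r s : Fin 3) : DependsOn (fun y => gS2 ℓ y r s) {1} := by
  intro y y' h
  simp [gS2, h 1 rfl]

theorem pd_gS2 (i r s : Fin 3) (x : Fin 3 → ℝ) :
    pd i (fun y => gS2 ℓ y r s) x =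
      if i = 1 ∧ r = 2 ∧ s = 2 then ℓ ^ 2 * (2 * sin (x 1) * cos (x 1)) else 0 := by
  rw [pd_of_dependsOn (dependsOn_gS2 ℓ r s)]
  fin_cases r <;> fin_cases s <;> simp [gS2]

-- Left uncancelled: `Γ^θ_{φφ} = -½ g^{θθ} ∂_θ g_{φφ}` and `Γ^φ_{θφ} = ½ g^{φφ} ∂_θ g_{φφ}`.
theorem christoffel_gS2 (x : Fin 3 → ℝ) (l i j : Fin 3) :
    christoffel (gS2 ℓ) (gS2inv ℓ) l i j x =
      if l = 1 ∧ i = 2 ∧ j = 2 then -((ℓ ^ 2)⁻¹ * (ℓ ^ 2 * sin (x 1) * cos (x 1)))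
      else if l = 2 ∧ (i = 1 ∧ j = 2 ∨ i = 2 ∧ j = 1) then
        (ℓ ^ 2 * sin (x 1) ^ 2)⁻¹ * (ℓ ^ 2 * sin (x 1) * cos (x 1))
      else 0 := by
  simp only [christoffel, pd_gS2]
  fin_cases l <;> fin_cases i <;> fin_cases j <;> simp [gS2inv] <;> ring

theorem hasDerivAt_γS2_update (hω : ω ^ 2 * ℓ ^ 2 < 1) (x : Fin 3 → ℝ) :
    HasDerivAt (fun t => γS2 ℓ ω (update x 1 t))
      (ω ^ 2 * ℓ ^ 2 * sin (x 1) * cos (x 1) * γS2 ℓ ω x ^ 3) (x 1) := by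
  have hpos : 0 < 1 - ω ^ 2 * ℓ ^ 2 * sin (x 1) ^ 2 := by
    nlinarith [mul_le_of_le_one_right (by positivity : 0 ≤ ω ^ 2 * ℓ ^ 2) (sin_sq_le_one (x 1))]
  have hq : HasDerivAt (fun t => 1 - ω ^ 2 * ℓ ^ 2 * sin t ^ 2)
      (-(ω ^ 2 * ℓ ^ 2 * (2 * sin (x 1) * cos (x 1)))) (x 1) := by
    simpa using (((hasDerivAt_sin (x 1)).pow 2).const_mul (ω ^ 2 * ℓ ^ 2)).const_sub 1
  convert hq.inv_sqrt hpos using 1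
  · funext t
    simp [γS2]
  · simp only [γS2, inv_pow, neg_mul]
    ring

theorem dependsOn_stress (μ ν : Fin 3) :
    DependsOn (fun y => P₀ * γS2 ℓ ω y ^ 3 *
      (gS2inv ℓ y μ ν + 3 * uS2 ℓ ω y μ * uS2 ℓ ω y ν)) {1} := by
  intro y y' h
  simp [γS2, gS2inv, uS2, h 1 rfl]

end RotatingFluidOnSphere

theorem stress_tensor_conserved_on_sphere_general (ℓ ω P₀ : ℝ)
    (hω : ω ^ 2 * ℓ ^ 2 < 1) :
    ∀ x : Fin 3 → ℝ, Real.sin (x 1) ≠ 0 → ∀ ν : Fin 3,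
      divTensor (gS2 ℓ) (gS2inv ℓ)
        (fun y μ' ν' => P₀ * γS2 ℓ ω y ^ 3 *
          (gS2inv ℓ y μ' ν' + 3 * uS2 ℓ ω y μ' * uS2 ℓ ω y ν')) ν x = 0 := by
  intro x _ ν
  rw [divTensor, sum_pd_of_dependsOn (fun μ => dependsOn_stress ℓ ω P₀ μ ν)]
  fin_cases ν
  · simp [Fin.sum_univ_three, christoffel_gS2, gS2inv, uS2]
  · have hγ3 : deriv (fun t => γS2 ℓ ω (update x 1 t) ^ 3) (x 1) =
        3 * γS2 ℓ ω x ^ 2 * (ω ^ 2 * ℓ ^ 2 * sin (x 1) * cos (x 1) * γS2 ℓ ω x ^ 3) := by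
      simpa using ((hasDerivAt_γS2_update ℓ ω hω x).fun_pow 3).deriv
    simp only [Fin.isValue, gS2inv, update_self, mul_inv_rev, Fin.mk_one, Matrix.diagonal_apply_eq,
      Matrix.cons_val_one, Matrix.cons_val_zero, uS2, mul_zero, add_zero, deriv_mul_const_field',
      deriv_const_mul_field', hγ3, christoffel_gS2, ite_mul, neg_mul,
      zero_mul, Fin.sum_univ_three, Fin.reduceEq, and_false, ↓reduceIte, zero_ne_one, or_self,
      and_true, false_or, and_self, zero_add, ne_eq, not_false_eq_true, Matrix.diagonal_apply_ne,
      neg_zero, or_false, ite_self, Finset.sum_ite_eq', Finset.mem_univ, true_and, false_and,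
      Matrix.cons_val]
    ring
  · simp [Fin.sum_univ_three, christoffel_gS2, gS2inv, uS2]

/-- **Conservation of the rotating-fluid stress tensor on ℝ×S².**
The tensor T^{μν} = 𝒫(g^{μν} + 3u^μu^ν) with 𝒫 = 𝒫₀γ³ is divergence-free. -/
theorem stress_tensor_conserved_on_sphere (ℓ ω P₀ : ℝ) (hℓ : 0 < ℓ)
    (hω : ω ^ 2 * ℓ ^ 2 < 1) :
    ∀ x : Fin 3 → ℝ, Real.sin (x 1) ≠ 0 → ∀ ν : Fin 3,
      divTensor (gS2 ℓ) (gS2inv ℓ)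
        (fun y μ' ν' => P₀ * γS2 ℓ ω y ^ 3 *
          (gS2inv ℓ y μ' ν' + 3 * uS2 ℓ ω y μ' * uS2 ℓ ω y ν')) ν x = 0 :=
  stress_tensor_conserved_on_sphere_general ℓ ω P₀ hω

end
end

section
/- Boundary diffeomorphism for Kerr-Newman-AdS: let $k \in \{1,-1\}$, $\Xi = 1 - ka^2/\ell^2 > 0$, $\Delta_\theta = 1 - (ka^2/\ell^2)c_k^2(\theta)$ where $c_1 = \cos$, $c_{-1} = \cosh$, $s_1 = \sin$, $s_{-1} = \sinh$. Under the coordinate change $\tau = t/\Xi$, $c_k(\Theta) = c_k(\theta)\sqrt{\Xi/\Delta_\theta}$, $\Phi = \varphi + kat/(\ell^2\Xi)$, the boundary metric $\hat{g} = -\Xi^{-2}dt^2 + \ell^2\Delta_\theta^{-1}d\theta^2 + \ell^2\Xi^{-1}s_k^2(\theta)d\varphi^2 + 2(ak/\Xi^2)s_k^2(\theta)dt\,d\varphi$ takes the form $\hat{g} = (\Delta_\theta/\Xi)\left(-d\tau^2 + \ell^2(d\Theta^2 + s_k^2(\Theta)d\Phi^2)\right)$; in particular $\hat{g}$ is conformal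 to the ultrastatic metric $-d\tau^2 + \ell^2(d\Theta^2 + s_k^2(\Theta)d\Phi^2)$ with conformal factor $\Omega^2 = \Xi/\Delta_\theta$. -/
/-!
Write `q = ka²/ℓ²`, `Ξ = 1 - q`, `Δ = 1 - q c_k²(θ)`. The Pythagorean identity turns
`c_k(Θ)² = c_k(θ)² Ξ/Δ` into `s_k(Θ)² = s_k(θ)²/Δ`. Differentiating the defining relation of `Θ`
gives `s_k(Θ) Θ' = s_k √(Ξ/Δ)/Δ`, hence `Θ'² = Ξ/Δ²`. With these, completing the square in
`dΦ = dφ + (ka/ℓ²Ξ) dt` leaves only the `dt²` coefficients to compare, and they agree because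
`Δ - Ξ = q k s_k² = k²a²s_k²/ℓ²`.
-/

noncomputable section

open Real

theorem sk_sq_eq_div_of_ck_eq_mul_sqrt {k q c s c' s' : ℝ} (hk : k ≠ 0) (hΞ : 0 < 1 - q)
    (hΔ : 0 < 1 - q * c ^ 2) (hpyth : c ^ 2 + k * s ^ 2 = 1) (hpyth' : c' ^ 2 + k * s' ^ 2 = 1)
    (hc' : c' = c * √((1 - q) / (1 - q * c ^ 2))) :
    s' ^ 2 = s ^ 2 / (1 - q * c ^ 2) := by
  have hc'sq : c' ^ 2 = c ^ 2 * ((1 - q) / (1 - q * c ^ 2)) := by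
    rw [hc', mul_pow, sq_sqrt (div_pos hΞ hΔ).le]
  have hΞ' := div_mul_cancel₀ (1 - q) hΔ.ne'
  rw [eq_div_iff hΔ.ne']
  apply mul_left_cancel₀ hk
  linear_combination (1 - q * c ^ 2) * hpyth' - hpyth - (1 - q * c ^ 2) * hc'sq - c ^ 2 * hΞ'

theorem hasDerivAt_ck_mul_sqrt {k q θ : ℝ} {s c : ℝ → ℝ}
    (hc : HasDerivAt c (-(k * s θ)) θ) (hΞ : 0 < 1 - q) (hΔ : 0 < 1 - q * c θ ^ 2) :
    HasDerivAt (fun t => c t * √((1 - q) / (1 - q * c t ^ 2)))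
      (-(k * s θ) * √((1 - q) / (1 - q * c θ ^ 2)) / (1 - q * c θ ^ 2)) θ := by
  have hΞΔ : 0 < (1 - q) / (1 - q * c θ ^ 2) := div_pos hΞ hΔ
  have hΔ' : HasDerivAt (fun t => 1 - q * c t ^ 2) (-(q * (2 * c θ * -(k * s θ)))) θ := by
    simpa using ((hc.pow 2).const_mul q).const_sub 1
  have hsqrt := ((hasDerivAt_const θ (1 - q)).div hΔ' hΔ.ne').sqrt hΞΔ.ne'
  refine (hc.mul hsqrt).congr_deriv ?_
  have hS := sq_sqrt hΞΔ.le
  have hSpos := sqrt_pos.mpr hΞΔ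
  simp only [Pi.div_apply]
  generalize √((1 - q) / (1 - q * c θ ^ 2)) = S at hS hSpos ⊢
  generalize hD : 1 - q * c θ ^ 2 = Δ at hS hΔ ⊢
  rw [eq_div_iff hΔ.ne'] at hS
  field_simp
  linear_combination 2 * k * s θ * ((1 - Δ) * hS + (1 - q) * hD)

section

variable {k q θ : ℝ} {s c Θ : ℝ → ℝ}

theorem sk_comp_mul_deriv_eq (hk : k ≠ 0) (hc : ∀ x, HasDerivAt c (-(k * s x)) x)
    (hΘd : DifferentiableAt ℝ Θ θ) (hΘ : ∀ t, c (Θ t) = c t * √((1 - q) / (1 - q * c t ^ 2)))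
    (hΞ : 0 < 1 - q) (hΔ : 0 < 1 - q * c θ ^ 2) :
    s (Θ θ) * deriv Θ θ = s θ * √((1 - q) / (1 - q * c θ ^ 2)) / (1 - q * c θ ^ 2) := by
  have hcomp : HasDerivAt (fun t => c (Θ t)) (-(k * s (Θ θ)) * deriv Θ θ) θ :=
    (hc (Θ θ)).comp θ hΘd.hasDerivAt
  rw [funext hΘ] at hcomp
  have h := hcomp.unique (hasDerivAt_ck_mul_sqrt (hc θ) hΞ hΔ)
  apply mul_left_cancel₀ (neg_ne_zero.mpr hk)
  linear_combination h

theorem deriv_sq_eq_of_ck_comp_eq (hk : k ≠ 0) (hpyth : ∀ x, c x ^ 2 + k * s x ^ 2 = 1)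
    (hc : ∀ x, HasDerivAt c (-(k * s x)) x) (hΘd : DifferentiableAt ℝ Θ θ)
    (hΘ : ∀ t, c (Θ t) = c t * √((1 - q) / (1 - q * c t ^ 2)))
    (hΞ : 0 < 1 - q) (hΔ : 0 < 1 - q * c θ ^ 2) (hsΘ : s (Θ θ) ≠ 0) :
    deriv Θ θ ^ 2 = (1 - q) / (1 - q * c θ ^ 2) ^ 2 := by
  have hΞΔ : 0 < (1 - q) / (1 - q * c θ ^ 2) := div_pos hΞ hΔ
  have hsΘsq := sk_sq_eq_div_of_ck_eq_mul_sqrt hk hΞ hΔ (hpyth θ) (hpyth (Θ θ)) (hΘ θ)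
  have hsθ : s θ ≠ 0 := fun h0 => hsΘ (by simpa [h0] using hsΘsq)
  have hsq := congrArg (· ^ 2) (sk_comp_mul_deriv_eq hk hc hΘd hΘ hΞ hΔ)
  simp only [mul_pow, div_pow, sq_sqrt hΞΔ.le, hsΘsq] at hsq
  generalize 1 - q * c θ ^ 2 = Δ at hΔ hsq ⊢
  -- `field_simp` also cancels the common factor `s θ ^ 2`, using `hsθ`.
  field_simp at hsq ⊢
  exact hsq

end

theorem boundary_metric_eq_conformal_ultrastatic {k a ℓ q c s sΘ Θ' v₀ v₁ v₂ : ℝ}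
    (hq : q * ℓ ^ 2 = k * a ^ 2) (hℓ : ℓ ≠ 0) (hΞ : 1 - q ≠ 0) (hΔ : 1 - q * c ^ 2 ≠ 0)
    (hpyth : c ^ 2 + k * s ^ 2 = 1) (hΘ' : Θ' ^ 2 = (1 - q) / (1 - q * c ^ 2) ^ 2)
    (hsΘ : sΘ ^ 2 = s ^ 2 / (1 - q * c ^ 2)) :
    -v₀ ^ 2 / (1 - q) ^ 2 + ℓ ^ 2 / (1 - q * c ^ 2) * v₁ ^ 2
        + ℓ ^ 2 / (1 - q) * s ^ 2 * v₂ ^ 2 + 2 * (a * k / (1 - q) ^ 2) * s ^ 2 * v₀ * v₂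
      = ((1 - q * c ^ 2) / (1 - q)) *
        (-(v₀ / (1 - q)) ^ 2
          + ℓ ^ 2 * ((Θ' * v₁) ^ 2 + sΘ ^ 2 * (v₂ + k * a * v₀ / (ℓ ^ 2 * (1 - q))) ^ 2)) := by
  rw [mul_pow Θ', hΘ', hsΘ]
  generalize hD : 1 - q * c ^ 2 = Δ at hΔ ⊢
  generalize hX : 1 - q = Ξ at hΞ ⊢
  field_simp
  linear_combination v₀ ^ 2 * Δ * (ℓ ^ 2 * (hX - hD - q * hpyth) + k * s ^ 2 * hq)

theorem knads_boundary_conformally_ultrastatic_general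
    (k a ℓ : ℝ) (hk : k = 1 ∨ k = -1) (hℓ : 0 < ℓ)
    (hΞ : 0 < 1 - k * a ^ 2 / ℓ ^ 2)
    (sk ck : ℝ → ℝ)
    (hpyth : ∀ x : ℝ, ck x ^ 2 + k * sk x ^ 2 = 1)
    (hc : ∀ x : ℝ, HasDerivAt ck (-(k * sk x)) x)
    (Θ : ℝ → ℝ) (hΘd : ∀ θ : ℝ, DifferentiableAt ℝ Θ θ)
    (hΘ : ∀ θ : ℝ, ck (Θ θ) = ck θ *
      Real.sqrt ((1 - k * a ^ 2 / ℓ ^ 2) / (1 - k * a ^ 2 / ℓ ^ 2 * ck θ ^ 2))) :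
    ∀ x : Fin 3 → ℝ, 0 < 1 - k * a ^ 2 / ℓ ^ 2 * ck (x 1) ^ 2 →
      sk (Θ (x 1)) ≠ 0 →
      ∀ v : Fin 3 → ℝ,
        -(v 0) ^ 2 / (1 - k * a ^ 2 / ℓ ^ 2) ^ 2
            + ℓ ^ 2 / (1 - k * a ^ 2 / ℓ ^ 2 * ck (x 1) ^ 2) * (v 1) ^ 2
            + ℓ ^ 2 / (1 - k * a ^ 2 / ℓ ^ 2) * sk (x 1) ^ 2 * (v 2) ^ 2
            + 2 * (a * k / (1 - k * a ^ 2 / ℓ ^ 2) ^ 2) * sk (x 1) ^ 2 * v 0 * v 2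
          = ((1 - k * a ^ 2 / ℓ ^ 2 * ck (x 1) ^ 2) / (1 - k * a ^ 2 / ℓ ^ 2)) *
            (-(v 0 / (1 - k * a ^ 2 / ℓ ^ 2)) ^ 2
              + ℓ ^ 2 * ((deriv Θ (x 1) * v 1) ^ 2
                + sk (Θ (x 1)) ^ 2 *
                    (v 2 + k * a * v 0 / (ℓ ^ 2 * (1 - k * a ^ 2 / ℓ ^ 2))) ^ 2)) := by
  intro x hΔ hsΘ v
  have hk0 : k ≠ 0 := by rcases hk with rfl | rfl <;> norm_num
  have hΘ' := deriv_sq_eq_of_ck_comp_eq hk0 hpyth hc (hΘd (x 1)) hΘ hΞ hΔ hsΘ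
  have hsΘsq := sk_sq_eq_div_of_ck_eq_mul_sqrt hk0 hΞ hΔ (hpyth _) (hpyth _) (hΘ (x 1))
  have hq : k * a ^ 2 / ℓ ^ 2 * ℓ ^ 2 = k * a ^ 2 := div_mul_cancel₀ _ (pow_ne_zero 2 hℓ.ne')
  exact boundary_metric_eq_conformal_ultrastatic hq hℓ.ne' hΞ.ne' hΔ.ne' (hpyth _) hΘ' hsΘsq

/-- **Boundary diffeomorphism for Kerr–Newman–AdS.** Let k = ±1,
Ξ = 1 - ka²/ℓ² > 0, Δ_θ = 1 - (ka²/ℓ²)c_k²(θ), where s_k, c_k satisfy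
c_k² + k s_k² = 1, s_k' = c_k, c_k' = -k s_k. Under τ = t/Ξ,
c_k(Θ) = c_k(θ)√(Ξ/Δ_θ), Φ = φ + kat/(ℓ²Ξ), the boundary metric
ĝ = -Ξ⁻²dt² + ℓ²Δ_θ⁻¹dθ² + ℓ²Ξ⁻¹s_k²(θ)dφ² + 2(ak/Ξ²)s_k²(θ)dt dφ
equals (Δ_θ/Ξ)(-dτ² + ℓ²(dΘ² + s_k²(Θ)dΦ²)). -/
theorem knads_boundary_conformally_ultrastatic
    (k a ℓ : ℝ) (hk : k = 1 ∨ k = -1) (hℓ : 0 < ℓ)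
    (hΞ : 0 < 1 - k * a ^ 2 / ℓ ^ 2)
    (sk ck : ℝ → ℝ)
    (hpyth : ∀ x : ℝ, ck x ^ 2 + k * sk x ^ 2 = 1)
    (hs : ∀ x : ℝ, HasDerivAt sk (ck x) x)
    (hc : ∀ x : ℝ, HasDerivAt ck (-(k * sk x)) x)
    (Θ : ℝ → ℝ) (hΘd : ∀ θ : ℝ, DifferentiableAt ℝ Θ θ)
    (hΘ : ∀ θ : ℝ, ck (Θ θ) = ck θ *
      Real.sqrt ((1 - k * a ^ 2 / ℓ ^ 2) / (1 - k * a ^ 2 / ℓ ^ 2 * ck θ ^ 2))) :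
    ∀ x : Fin 3 → ℝ, 0 < 1 - k * a ^ 2 / ℓ ^ 2 * ck (x 1) ^ 2 →
      sk (Θ (x 1)) ≠ 0 →
      ∀ v : Fin 3 → ℝ,
        -(v 0) ^ 2 / (1 - k * a ^ 2 / ℓ ^ 2) ^ 2
            + ℓ ^ 2 / (1 - k * a ^ 2 / ℓ ^ 2 * ck (x 1) ^ 2) * (v 1) ^ 2
            + ℓ ^ 2 / (1 - k * a ^ 2 / ℓ ^ 2) * sk (x 1) ^ 2 * (v 2) ^ 2
            + 2 * (a * k / (1 - k * a ^ 2 / ℓ ^ 2) ^ 2) * sk (x 1) ^ 2 * v 0 * v 2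
          = ((1 - k * a ^ 2 / ℓ ^ 2 * ck (x 1) ^ 2) / (1 - k * a ^ 2 / ℓ ^ 2)) *
            (-(v 0 / (1 - k * a ^ 2 / ℓ ^ 2)) ^ 2
              + ℓ ^ 2 * ((deriv Θ (x 1) * v 1) ^ 2
                + sk (Θ (x 1)) ^ 2 *
                    (v 2 + k * a * v 0 / (ℓ ^ 2 * (1 - k * a ^ 2 / ℓ ^ 2))) ^ 2)) :=
  knads_boundary_conformally_ultrastatic_general k a ℓ hk hℓ hΞ sk ck hpyth hc Θ hΘd hΘ

end
end

section
/- Ultrastatic form of the Carter-Pleba\'nski boundary in the hyperbolic rotating case ($\Gamma < 0$, so $\alpha_+ > 0 > \alpha_-$ with $\alpha_\pm = \ell^2(\epsilon\pm\sqrt\Delta)/2$): for $p > \sqrt{\alpha_+}$, under the coordinate change $T = -\ell\sqrt{-\alpha_-\Delta}\,\tau_-$, $\sinh\Theta = \sqrt{\frac{-\alpha_-(p^2-\alpha_+)}{\alpha_+(p^2-\alpha_-)}}$, $\Phi = \sqrt{\alpha_+\Delta}\,\tau_+$, the metric $\Psi_+(p)d\tau_+^2 + \Psi_-(p)d\tau_-^2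 + \frac{\ell^2}{\mathsf{P}(p)}dp^2$ with $\Psi_\pm(p) = \pm\ell^2\sqrt\Delta(p^2 - \alpha_\pm)$ and $\mathsf{P}(p) = \frac{1}{\ell^2}(p^2-\alpha_+)(p^2-\alpha_-)$, multiplied by the conformal factor $\Omega^2 = -\ell^2\alpha_-\Delta/\Psi_-(p)$, equals $-dT^2 + \ell^2(d\Theta^2 + \sinh^2\Theta\, d\Phi^2)$, with $\Theta$ ranging over $(0, \mathrm{arsinh}\sqrt{-\alpha_- /\alpha_+})$. -/
noncomputable section

open Real

lemma cp_key (ℓ Δ s a b p : ℝ) (hℓ : 0 < ℓ) (hs : 0 < s) (hsΔ : s ^ 2 = Δ)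
    (ha : 0 < a) (hb : b < 0) (hab : a - b = ℓ ^ 2 * s) (hp : a < p ^ 2) :
    ∀ v0 v1 v2 : ℝ,
    -(-(ℓ * Real.sqrt (-b * Δ)) * v1) ^ 2
      + ℓ ^ 2 * ((deriv (fun q : ℝ =>
            Real.arsinh (Real.sqrt (-b * (q ^ 2 - a) / (a * (q ^ 2 - b))))) p * v2) ^ 2
        + Real.sinh (Real.arsinh (Real.sqrt (-b * (p ^ 2 - a) / (a * (p ^ 2 - b))))) ^ 2
            * (Real.sqrt (a * Δ) * v0) ^ 2)
    = -(ℓ ^ 2 * b * Δ) / -(-(ℓ ^ 2 * s * (p ^ 2 - b))) *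
        (ℓ ^ 2 * s * (p ^ 2 - a) * v0 ^ 2 + -(ℓ ^ 2 * s * (p ^ 2 - b)) * v1 ^ 2
          + ℓ ^ 2 / ((p ^ 2 - a) * (p ^ 2 - b) / ℓ ^ 2) * v2 ^ 2) := by
  intro v0 v1 v2
  subst hsΔ
  have hA : 0 < p ^ 2 - a := by linarith
  have hB : 0 < p ^ 2 - b := by nlinarith
  have hp0 : p ≠ 0 := by intro h; rw [h] at hp; nlinarith
  have hden : a * (p ^ 2 - b) ≠ 0 := by positivity
  have hg0 : 0 < -b * (p ^ 2 - a) / (a * (p ^ 2 - b)) := by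
    apply div_pos (by nlinarith) (by positivity)
  -- derivative of g
  have hnum : HasDerivAt (fun q : ℝ => -b * (q ^ 2 - a)) (-b * (2 * p)) p := by
    have := ((hasDerivAt_pow 2 p).sub_const a).const_mul (-b)
    simpa using this
  have hden' : HasDerivAt (fun q : ℝ => a * (q ^ 2 - b)) (a * (2 * p)) p := by
    have := ((hasDerivAt_pow 2 p).sub_const b).const_mul a
    simpa using this
  have hg : HasDerivAt (fun q : ℝ => -b * (q ^ 2 - a) / (a * (q ^ 2 - b)))
      ((-b * (2 * p) * (a * (p ^ 2 - b)) - -b * (p ^ 2 - a) * (a * (2 * p))) /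
        (a * (p ^ 2 - b)) ^ 2) p := hnum.div hden' hden
  have hsq : HasDerivAt (fun q : ℝ => Real.sqrt (-b * (q ^ 2 - a) / (a * (q ^ 2 - b))))
      (((-b * (2 * p) * (a * (p ^ 2 - b)) - -b * (p ^ 2 - a) * (a * (2 * p))) /
        (a * (p ^ 2 - b)) ^ 2) / (2 * Real.sqrt (-b * (p ^ 2 - a) / (a * (p ^ 2 - b))))) p :=
    hg.sqrt hg0.ne'
  have har := (Real.hasDerivAt_arsinh (Real.sqrt (-b * (p ^ 2 - a) / (a * (p ^ 2 - b))))).comp p hsq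
  have har' : HasDerivAt (fun q : ℝ =>
      Real.arsinh (Real.sqrt (-b * (q ^ 2 - a) / (a * (q ^ 2 - b)))))
      ((Real.sqrt (1 + Real.sqrt (-b * (p ^ 2 - a) / (a * (p ^ 2 - b))) ^ 2))⁻¹ *
        ((-b * (2 * p) * (a * (p ^ 2 - b)) - -b * (p ^ 2 - a) * (a * (2 * p))) /
        (a * (p ^ 2 - b)) ^ 2 / (2 * Real.sqrt (-b * (p ^ 2 - a) / (a * (p ^ 2 - b)))))) p := har
  have hD := har'.deriv
  set g' := (-b * (2 * p) * (a * (p ^ 2 - b)) - -b * (p ^ 2 - a) * (a * (2 * p))) /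
        (a * (p ^ 2 - b)) ^ 2 with hg'def
  have hab0 : a - b ≠ 0 := by nlinarith
  have hg'val : g' = -(2 * a * b * p * (a - b)) / (a * (p ^ 2 - b)) ^ 2 := by
    rw [hg'def]; congr 1; ring
  have h1G : 1 + -b * (p ^ 2 - a) / (a * (p ^ 2 - b)) = (a - b) * p ^ 2 / (a * (p ^ 2 - b)) := by
    field_simp
    ring
  have hD2 : (deriv (fun q : ℝ =>
      Real.arsinh (Real.sqrt (-b * (q ^ 2 - a) / (a * (q ^ 2 - b))))) p) ^ 2
      = -b * (ℓ ^ 2 * s) / ((p ^ 2 - b) ^ 2 * (p ^ 2 - a)) := by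
    rw [hD, ← hab]
    rw [mul_pow, div_pow, inv_pow, Real.sq_sqrt (by positivity),
      Real.sq_sqrt hg0.le, mul_pow, Real.sq_sqrt hg0.le, h1G, hg'val]
    have key2 : ∀ A B c : ℝ, A ≠ 0 → B ≠ 0 → c ≠ 0 →
        (c * p ^ 2 / (a * B))⁻¹ *
          ((-(2 * a * b * p * c) / (a * B) ^ 2) ^ 2 / (2 ^ 2 * (-b * A / (a * B))))
          = -b * c / (B ^ 2 * A) := by
      intro A B c hA0 hB0 hc0
      have ha' := ha.ne'
      have hb' := hb.ne
      simp only [div_eq_mul_inv, mul_inv, inv_inv, inv_pow, mul_pow, neg_mul, neg_neg, mul_neg]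
      field_simp
    exact key2 _ _ _ hA.ne' hB.ne' hab0
  have h1 : Real.sqrt (-b * s ^ 2) ^ 2 = -b * s ^ 2 := Real.sq_sqrt (by nlinarith)
  have h2 : Real.sqrt (a * s ^ 2) ^ 2 = a * s ^ 2 := Real.sq_sqrt (by positivity)
  have e1 : (-(ℓ * Real.sqrt (-b * s ^ 2)) * v1) ^ 2 = ℓ ^ 2 * (-b * s ^ 2) * v1 ^ 2 := by
    rw [mul_pow, neg_sq, mul_pow, h1]
  have e2 : (Real.sqrt (a * s ^ 2) * v0) ^ 2 = a * s ^ 2 * v0 ^ 2 := by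
    rw [mul_pow, h2]
  rw [Real.sinh_arsinh, Real.sq_sqrt hg0.le, e1, e2, mul_pow, hD2]
  field_simp
  ring

lemma cp_part2 (a b : ℝ) (p : ℝ) (ha : 0 < a) (hb : b < 0) (hp : Real.sqrt a < p) :
    0 < Real.arsinh (Real.sqrt (-b * (p ^ 2 - a) / (a * (p ^ 2 - b)))) ∧
    Real.arsinh (Real.sqrt (-b * (p ^ 2 - a) / (a * (p ^ 2 - b))))
      < Real.arsinh (Real.sqrt (-b / a)) := by
  have hp0 : 0 < p := lt_of_le_of_lt (Real.sqrt_nonneg a) hp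
  have hpa : a < p ^ 2 := (Real.sqrt_lt' hp0).mp hp
  have hA : 0 < p ^ 2 - a := by linarith
  have hB : 0 < p ^ 2 - b := by nlinarith
  have hg0 : 0 < -b * (p ^ 2 - a) / (a * (p ^ 2 - b)) :=
    div_pos (by nlinarith) (by positivity)
  constructor
  · rw [← Real.arsinh_zero, Real.arsinh_lt_arsinh]
    exact Real.sqrt_pos.mpr hg0
  · rw [Real.arsinh_lt_arsinh]
    apply Real.sqrt_lt_sqrt hg0.le
    rw [div_lt_div_iff₀ (by positivity) ha]
    nlinarith [mul_pos (mul_pos (neg_pos.mpr hb) ha) (sub_pos.mpr (lt_trans hb ha))]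

/-- **Ultrastatic form of the Carter–Plebański boundary, hyperbolic rotating
case (Γ < 0).** With Δ = ε² - 4Γ/ℓ², α± = ℓ²(ε±√Δ)/2 (so α₊ > 0 > α₋),
Ψ±(p) = ±ℓ²√Δ(p²-α±), P(p) = (p²-α₊)(p²-α₋)/ℓ², and the coordinate change
T = -ℓ√(-α₋Δ)τ₋, sinh Θ = √(-α₋(p²-α₊)/(α₊(p²-α₋))), Φ = √(α₊Δ)τ₊ for
p > √α₊, the metric Ψ₊dτ₊² + Ψ₋dτ₋² + (ℓ²/P)dp², multiplied by the (positive)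
conformal factor Ω² = (-ℓ²α₋Δ)/(-Ψ₋(p)), equals
-dT² + ℓ²(dΘ² + sinh²Θ dΦ²), with Θ ranging in (0, arsinh√(-α₋/α₊)). -/
theorem cp_boundary_hyperbolic_ultrastatic (ℓ ε Γ : ℝ) (hℓ : 0 < ℓ) (hΓ : Γ < 0) :
    (0 < ℓ ^ 2 * (ε + Real.sqrt (ε ^ 2 - 4 * Γ / ℓ ^ 2)) / 2 ∧
     ℓ ^ 2 * (ε - Real.sqrt (ε ^ 2 - 4 * Γ / ℓ ^ 2)) / 2 < 0) ∧
    (∀ p : ℝ, Real.sqrt (ℓ ^ 2 * (ε + Real.sqrt (ε ^ 2 - 4 * Γ / ℓ ^ 2)) / 2) < p →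
      (0 < Real.arsinh (Real.sqrt
          ((-(ℓ ^ 2 * (ε - Real.sqrt (ε ^ 2 - 4 * Γ / ℓ ^ 2)) / 2) *
              (p ^ 2 - ℓ ^ 2 * (ε + Real.sqrt (ε ^ 2 - 4 * Γ / ℓ ^ 2)) / 2)) /
            (ℓ ^ 2 * (ε + Real.sqrt (ε ^ 2 - 4 * Γ / ℓ ^ 2)) / 2 *
              (p ^ 2 - ℓ ^ 2 * (ε - Real.sqrt (ε ^ 2 - 4 * Γ / ℓ ^ 2)) / 2)))) ∧
       Real.arsinh (Real.sqrt
          ((-(ℓ ^ 2 * (ε - Real.sqrt (ε ^ 2 - 4 * Γ / ℓ ^ 2)) / 2) *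
              (p ^ 2 - ℓ ^ 2 * (ε + Real.sqrt (ε ^ 2 - 4 * Γ / ℓ ^ 2)) / 2)) /
            (ℓ ^ 2 * (ε + Real.sqrt (ε ^ 2 - 4 * Γ / ℓ ^ 2)) / 2 *
              (p ^ 2 - ℓ ^ 2 * (ε - Real.sqrt (ε ^ 2 - 4 * Γ / ℓ ^ 2)) / 2))))
         < Real.arsinh (Real.sqrt
            (-(ℓ ^ 2 * (ε - Real.sqrt (ε ^ 2 - 4 * Γ / ℓ ^ 2)) / 2) /
              (ℓ ^ 2 * (ε + Real.sqrt (ε ^ 2 - 4 * Γ / ℓ ^ 2)) / 2))))) ∧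
    (∀ x : Fin 3 → ℝ,
      Real.sqrt (ℓ ^ 2 * (ε + Real.sqrt (ε ^ 2 - 4 * Γ / ℓ ^ 2)) / 2) < x 2 →
      ∀ v : Fin 3 → ℝ,
      -- abbreviations: Δ, α₊, α₋, the function Θ(p), its derivative, Ψ±, P, Ω²
      (let Δ := ε ^ 2 - 4 * Γ / ℓ ^ 2
       let αp := ℓ ^ 2 * (ε + Real.sqrt Δ) / 2
       let αm := ℓ ^ 2 * (ε - Real.sqrt Δ) / 2
       let Θf : ℝ → ℝ := fun p =>
         Real.arsinh (Real.sqrt ((-αm * (p ^ 2 - αp)) / (αp * (p ^ 2 - αm))))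
       let Ψp : ℝ → ℝ := fun p => ℓ ^ 2 * Real.sqrt Δ * (p ^ 2 - αp)
       let Ψm : ℝ → ℝ := fun p => -(ℓ ^ 2 * Real.sqrt Δ * (p ^ 2 - αm))
       let Pf : ℝ → ℝ := fun p => (p ^ 2 - αp) * (p ^ 2 - αm) / ℓ ^ 2
       let Ω2 : ℝ → ℝ := fun p => (-(ℓ ^ 2 * αm * Δ)) / (-(Ψm p))
       (-(-(ℓ * Real.sqrt (-αm * Δ)) * v 1) ^ 2
         + ℓ ^ 2 * ((deriv Θf (x 2) * v 2) ^ 2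
             + Real.sinh (Θf (x 2)) ^ 2 * (Real.sqrt (αp * Δ) * v 0) ^ 2)
         = Ω2 (x 2) *
             (Ψp (x 2) * (v 0) ^ 2 + Ψm (x 2) * (v 1) ^ 2
               + ℓ ^ 2 / Pf (x 2) * (v 2) ^ 2)))) := by
  have hl2 : (0:ℝ) < ℓ ^ 2 := by positivity
  have hΔ : 0 < ε ^ 2 - 4 * Γ / ℓ ^ 2 := by
    have h4 : 4 * Γ / ℓ ^ 2 < 0 := div_neg_of_neg_of_pos (by linarith) hl2
    nlinarith [sq_nonneg ε]
  have hs : 0 < Real.sqrt (ε ^ 2 - 4 * Γ / ℓ ^ 2) := Real.sqrt_pos.mpr hΔ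
  have hsΔ : Real.sqrt (ε ^ 2 - 4 * Γ / ℓ ^ 2) ^ 2 = ε ^ 2 - 4 * Γ / ℓ ^ 2 :=
    Real.sq_sqrt hΔ.le
  have hΔε : ε ^ 2 < ε ^ 2 - 4 * Γ / ℓ ^ 2 := by
    have h4 : 4 * Γ / ℓ ^ 2 < 0 := div_neg_of_neg_of_pos (by linarith) hl2
    linarith
  have hεlt : ε < Real.sqrt (ε ^ 2 - 4 * Γ / ℓ ^ 2) := by nlinarith [hΔε, hsΔ, hs]
  have hεgt : -Real.sqrt (ε ^ 2 - 4 * Γ / ℓ ^ 2) < ε := by nlinarith [hΔε, hsΔ, hs]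
  have ha : 0 < ℓ ^ 2 * (ε + Real.sqrt (ε ^ 2 - 4 * Γ / ℓ ^ 2)) / 2 := by
    have h : 0 < ε + Real.sqrt (ε ^ 2 - 4 * Γ / ℓ ^ 2) := by linarith
    exact div_pos (mul_pos hl2 h) (by norm_num)
  have hb : ℓ ^ 2 * (ε - Real.sqrt (ε ^ 2 - 4 * Γ / ℓ ^ 2)) / 2 < 0 := by
    have h : ε - Real.sqrt (ε ^ 2 - 4 * Γ / ℓ ^ 2) < 0 := by linarith
    nlinarith
  have hab : ℓ ^ 2 * (ε + Real.sqrt (ε ^ 2 - 4 * Γ / ℓ ^ 2)) / 2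
      - ℓ ^ 2 * (ε - Real.sqrt (ε ^ 2 - 4 * Γ / ℓ ^ 2)) / 2
      = ℓ ^ 2 * Real.sqrt (ε ^ 2 - 4 * Γ / ℓ ^ 2) := by ring
  refine ⟨⟨ha, hb⟩, fun p hp => cp_part2 _ _ p ha hb hp, fun x hx v => ?_⟩
  have hp0 : 0 < x 2 := lt_of_le_of_lt (Real.sqrt_nonneg _) hx
  have hpa : ℓ ^ 2 * (ε + Real.sqrt (ε ^ 2 - 4 * Γ / ℓ ^ 2)) / 2 < (x 2) ^ 2 :=
    (Real.sqrt_lt' hp0).mp hx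
  exact cp_key ℓ (ε ^ 2 - 4 * Γ / ℓ ^ 2) (Real.sqrt (ε ^ 2 - 4 * Γ / ℓ ^ 2))
    (ℓ ^ 2 * (ε + Real.sqrt (ε ^ 2 - 4 * Γ / ℓ ^ 2)) / 2)
    (ℓ ^ 2 * (ε - Real.sqrt (ε ^ 2 - 4 * Γ / ℓ ^ 2)) / 2)
    (x 2) hℓ hs hsΔ ha hb hab hpa (v 0) (v 1) (v 2)

end
end
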